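/- arXiv:2303.05677 — 8 statements merged into one kernel-verified Lean document; each statement's English description precedes it below -/
import Mathlib

section
/- Let C be a category enriched in collectable filtered sets, of finite type. Then C is tame if and only if the series ∑_{n=0}^∞ (1 - ζ_C)^n converges in the complete normed ring M_C(A); and C is quasi-tame if and only if ∑_{n=0}^∞ (1-ζ_C)^n(a,b) converges in A for every pair of objects a, b. -/
noncomputable section
open Classical

/-- A function `f : ℝ → ℚ` is left finite. -/
def LeftFinite (f : ℝ → ℚ) : Prop := ∀ L : ℝ, {x : ℝ | x ≤ L ∧ f x ≠ 0}.Finite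

/-- Membership of the Novikov series ring `A = ℚ[[q^ℝ]]`. -/
def IsNov (f : ℝ → ℚ) : Prop := LeftFinite f ∧ ∀ x < (0 : ℝ), f x = 0

/-- Convolution product in `A`. -/
def conv (f g : ℝ → ℚ) : ℝ → ℚ := fun ℓ => ∑ᶠ x : ℝ, f x * g (ℓ - x)

/-- The unit `1 = q^0` of `A`. -/
def delta : ℝ → ℚ := fun x => if x = 0 then 1 else 0

/-- A category enriched in (`ℝ≥0`-)filtered sets: hom sets carry degrees, identities have
degree `0`, and composition does not increase total degree. -/
structure FCat (C : Type) where
  Hom : C → C → Type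
  deg : ∀ {a b : C}, Hom a b → ℝ
  id : ∀ a : C, Hom a a
  comp : ∀ {a b c : C}, Hom a b → Hom b c → Hom a c
  id_comp : ∀ {a b : C} (f : Hom a b), comp (id a) f = f
  comp_id : ∀ {a b : C} (f : Hom a b), comp f (id b) = f
  assoc : ∀ {a b c d : C} (f : Hom a b) (g : Hom b c) (h : Hom c d),
    comp (comp f g) h = comp f (comp g h)
  deg_nonneg : ∀ {a b : C} (f : Hom a b), 0 ≤ deg f
  deg_id : ∀ a : C, deg (id a) = 0
  deg_comp : ∀ {a b c : C} (f : Hom a b) (g : Hom b c), deg (comp f g) ≤ deg f + deg g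

variable {C : Type}

/-- `f` is an identity morphism. -/
def FCat.IsIdHom (X : FCat C) {a b : C} (f : X.Hom a b) : Prop :=
  a = b ∧ HEq f (X.id a)

/-- The enrichment is in collectable filtered sets: each filtration level of each hom
filtered set is finite. -/
def FCat.Collectable (X : FCat C) : Prop :=
  ∀ (a b : C) (ℓ : ℝ), {f : X.Hom a b | X.deg f ≤ ℓ}.Finite

/-- `X` is of finite type: for every object `a` and level `ℓ` there are only finitely many
morphisms of degree `≤ ℓ` with source `a`, or with target `a`. -/
def FCat.FiniteType (X : FCat C) : Prop :=
  ∀ (a : C) (ℓ : ℝ),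
    {p : Σ b : C, X.Hom a b | X.deg p.2 ≤ ℓ}.Finite ∧
    {p : Σ b : C, X.Hom b a | X.deg p.2 ≤ ℓ}.Finite

/-- The zeta function `ζ_X(a,b) = #X(a,b) = ∑_{f ∈ X(a,b)} q^{deg f}`. -/
def zeta (X : FCat C) (a b : C) : ℝ → ℚ :=
  fun x => (Nat.card {f : X.Hom a b // X.deg f = x} : ℚ)

/-- A non-degenerate path in `X` from `a` to `b`: a composable sequence of `n ≥ 1`
non-identity morphisms. -/
structure NDPath (X : FCat C) (a b : C) where
  n : ℕ
  npos : 0 < n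
  obj : Fin (n + 1) → C
  hom : ∀ i : Fin n, X.Hom (obj i.castSucc) (obj i.succ)
  src : obj 0 = a
  tgt : obj (Fin.last n) = b
  nonid : ∀ i : Fin n, ¬ X.IsIdHom (hom i)

/-- The length of a non-degenerate path. -/
def NDPath.length {X : FCat C} {a b : C} (p : NDPath X a b) : ℝ :=
  ∑ i : Fin p.n, X.deg (p.hom i)

/-- `X` is quasi-tame: of finite type, and there are finitely many non-degenerate paths
from `a` to `b` of length `≤ ℓ`, for all `a`, `b`, `ℓ`. -/
def QuasiTame (X : FCat C) : Prop :=
  X.FiniteType ∧ ∀ (a b : C) (ℓ : ℝ), {p : NDPath X a b | p.length ≤ ℓ}.Finite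

/-- `X` is tame: of finite type, and for every `ℓ` there is `N_ℓ > 0` such that every
non-degenerate `N_ℓ`-path has length `> ℓ`. -/
def Tame (X : FCat C) : Prop :=
  X.FiniteType ∧ ∀ ℓ : ℝ, ∃ N : ℕ, 0 < N ∧
    ∀ (a b : C) (p : NDPath X a b), p.n = N → ℓ < p.length

/-- Membership of `M_C(A)`. -/
def MSmat (C : Type) (f : C → C → ℝ → ℚ) : Prop :=
  ∀ (ℓ : ℝ) (s : C),
    {t : C | ∃ x : ℝ, x < ℓ ∧ f s t x ≠ 0}.Finite ∧
    {t : C | ∃ x : ℝ, x < ℓ ∧ f t s x ≠ 0}.Finite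

/-- Matrix convolution product. -/
def matConv (C : Type) (f g : C → C → ℝ → ℚ) : C → C → ℝ → ℚ :=
  fun s t x => ∑ᶠ u : C, conv (f s u) (g u t) x

/-- The identity matrix. -/
def matId (C : Type) : C → C → ℝ → ℚ := fun s t x => if s = t ∧ x = 0 then 1 else 0

/-- Powers of a matrix. -/
def matPow (C : Type) (f : C → C → ℝ → ℚ) : ℕ → (C → C → ℝ → ℚ)
  | 0 => matId C
  | n + 1 => matConv C f (matPow C f n)

namespace Aux

variable {C : Type}

/-- Cast a hom along equalities of endpoints. -/
def FCat.castHom (X : FCat C) {a a' b b' : C} (ha : a = a') (hb : b = b')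
    (f : X.Hom a b) : X.Hom a' b' := hb ▸ ha ▸ f

@[simp] lemma deg_castHom (X : FCat C) {a a' b b' : C} (ha : a = a') (hb : b = b')
    (f : X.Hom a b) : X.deg (FCat.castHom X ha hb f) = X.deg f := by
  subst ha; subst hb; rfl

@[simp] lemma isId_castHom (X : FCat C) {a a' b b' : C} (ha : a = a') (hb : b = b')
    (f : X.Hom a b) : X.IsIdHom (FCat.castHom X ha hb f) ↔ X.IsIdHom f := by
  subst ha; subst hb; exact Iff.rfl

lemma sigma_castHom (X : FCat C) {a a' b b' : C} (ha : a = a') (hb : b = b')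
    (f : X.Hom a b) :
    (⟨a', b', FCat.castHom X ha hb f⟩ : Σ a b, X.Hom a b) = ⟨a, b, f⟩ := by
  subst ha; subst hb; rfl

/-- Composable words of non-identity morphisms. -/
inductive Pth (X : FCat C) : ℕ → C → C → Type
  | nil (s : C) : Pth X 0 s s
  | cons {k : ℕ} {s u t : C} (f : X.Hom s u) (hf : ¬ X.IsIdHom f) (r : Pth X k u t) :
      Pth X (k+1) s t

/-- Length of a composable word. -/
def lenP (X : FCat C) : ∀ {k s t : _}, Pth X k s t → ℝ
  | _, _, _, .nil _ => 0
  | _, _, _, .cons f _ r => X.deg f + lenP X r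

lemma lenP_nonneg (X : FCat C) {k s t : _} (q : Pth X k s t) : 0 ≤ lenP X q := by
  induction q with
  | nil => exact le_refl 0
  | cons f hf r ih => exact add_nonneg (X.deg_nonneg _) ih

/-- Decomposition of `(k+1)`-words. -/
def pthEquiv (X : FCat C) (k : ℕ) (s t : C) :
    Pth X (k+1) s t ≃ Σ u : C, {f : X.Hom s u // ¬ X.IsIdHom f} × Pth X k u t where
  toFun q := by cases q with | cons f hf r => exact ⟨_, ⟨f, hf⟩, r⟩
  invFun z := .cons z.2.1.1 z.2.1.2 z.2.2
  left_inv q := by cases q; rfl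
  right_inv z := rfl

@[simp] lemma lenP_nil (X : FCat C) (s : C) : lenP X (.nil s) = 0 := rfl

@[simp] lemma lenP_cons' (X : FCat C) {k : ℕ} {s u t : C} (f : X.Hom s u)
    (hf : ¬ X.IsIdHom f) (r : Pth X k u t) :
    lenP X (.cons f hf r) = X.deg f + lenP X r := rfl

end Aux
namespace Aux
variable {C : Type}

/-- Finiteness of bounded-length words with fixed source. -/
lemma finite_sigma_pth (X : FCat C) (hft : X.FiniteType) :
    ∀ (k : ℕ) (s : C) (ℓ : ℝ), Finite (Σ t : C, {q : Pth X k s t // lenP X q ≤ ℓ}) := by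
  intro k
  induction k with
  | zero =>
    intro s ℓ
    have : ∀ z z' : (Σ t : C, {q : Pth X 0 s t // lenP X q ≤ ℓ}), z = z' := by
      rintro ⟨t, ⟨q, _⟩⟩ ⟨t', ⟨q', _⟩⟩
      cases q; cases q'; rfl
    exact Finite.of_injective (fun _ => (() : Unit)) (fun a b _ => this a b)
  | succ k ih =>
    intro s ℓ
    have h1 : Finite {p : Σ b : C, X.Hom s b | X.deg p.2 ≤ ℓ} := (hft s ℓ).1.to_subtype
    have h2 : ∀ u : C, Finite (Σ t : C, {q : Pth X k u t // lenP X q ≤ ℓ}) := fun u => ih u ℓ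
    let T := Σ p : {p : Σ b : C, X.Hom s b | X.deg p.2 ≤ ℓ},
      (Σ t : C, {q : Pth X k p.1.1 t // lenP X q ≤ ℓ})
    have : Finite T := by infer_instance
    apply Finite.of_injective (β := T) (fun z =>
      match z with
      | ⟨t, ⟨.cons (u := u) f hf r, hq⟩⟩ =>
        ⟨⟨⟨u, f⟩, by
          have h0 := lenP_nonneg X r
          simp only [lenP_cons'] at hq
          simpa using by linarith⟩,
         ⟨t, ⟨r, by
          have hd := X.deg_nonneg f
          simp only [lenP_cons'] at hq
          linarith⟩⟩⟩)
    rintro ⟨t, ⟨q, hq⟩⟩ ⟨t', ⟨q', hq'⟩⟩ h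
    cases q with | cons f hf r =>
    cases q' with | cons f' hf' r' =>
    obtain ⟨hp, hz⟩ := Sigma.ext_iff.mp h
    obtain ⟨hu, hfe⟩ := Sigma.ext_iff.mp (congrArg Subtype.val hp)
    simp only at hu hfe
    subst hu
    have hf2 : f = f' := eq_of_heq hfe
    subst hf2
    obtain ⟨ht, hr⟩ := Sigma.ext_iff.mp (eq_of_heq hz)
    simp only at ht hr
    subst ht
    have hr2 : r = r' := congrArg Subtype.val (eq_of_heq hr)
    subst hr2; rfl

/-- Finiteness of bounded-length words with fixed target. -/
lemma finite_sigma_pth' (X : FCat C) (hft : X.FiniteType) :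
    ∀ (k : ℕ) (t : C) (ℓ : ℝ), Finite (Σ s : C, {q : Pth X k s t // lenP X q ≤ ℓ}) := by
  intro k
  induction k with
  | zero =>
    intro t ℓ
    have : ∀ z z' : (Σ s : C, {q : Pth X 0 s t // lenP X q ≤ ℓ}), z = z' := by
      rintro ⟨s, ⟨q, _⟩⟩ ⟨s', ⟨q', _⟩⟩
      cases q; cases q'; rfl
    exact Finite.of_injective (fun _ => (() : Unit)) (fun a b _ => this a b)
  | succ k ih =>
    intro t ℓ
    have h2 : Finite (Σ u : C, {q : Pth X k u t // lenP X q ≤ ℓ}) := ih t ℓ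
    have h1 : ∀ u : C, Finite {p : Σ b : C, X.Hom b u | X.deg p.2 ≤ ℓ} :=
      fun u => (hft u ℓ).2.to_subtype
    let T := Σ z : (Σ u : C, {q : Pth X k u t // lenP X q ≤ ℓ}),
      {p : Σ b : C, X.Hom b z.1 | X.deg p.2 ≤ ℓ}
    have : Finite T := by infer_instance
    apply Finite.of_injective (β := T) (fun z =>
      match z with
      | ⟨s, ⟨.cons (u := u) f hf r, hq⟩⟩ =>
        ⟨⟨u, ⟨r, by
          have hd := X.deg_nonneg f
          simp only [lenP_cons'] at hq
          linarith⟩⟩,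
         ⟨⟨s, f⟩, by
          have h0 := lenP_nonneg X r
          simp only [lenP_cons'] at hq
          simpa using by linarith⟩⟩)
    rintro ⟨s, ⟨q, hq⟩⟩ ⟨s', ⟨q', hq'⟩⟩ h
    cases q with | cons f hf r =>
    cases q' with | cons f' hf' r' =>
    obtain ⟨hz, hsf⟩ := Sigma.ext_iff.mp h
    obtain ⟨hu, hr⟩ := Sigma.ext_iff.mp hz
    simp only at hu hr
    subst hu
    have hr2 : r = r' := congrArg Subtype.val (eq_of_heq hr)
    subst hr2
    obtain ⟨hs, hfe⟩ := Sigma.ext_iff.mp (congrArg Subtype.val (eq_of_heq hsf))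
    simp only at hs hfe
    subst hs
    have hf2 : f = f' := eq_of_heq hfe
    subst hf2; rfl

/-- Finiteness of fixed-length word sets. -/
lemma finite_pth_eq (X : FCat C) (hft : X.FiniteType) (k : ℕ) (s t : C) (x : ℝ) :
    Finite {q : Pth X k s t // lenP X q = x} := by
  have := finite_sigma_pth X hft k s (max x 0)
  apply Finite.of_injective (β := Σ t' : C, {q : Pth X k s t' // lenP X q ≤ max x 0})
    (fun z => ⟨t, ⟨z.1, by rw [z.2]; exact le_max_left _ _⟩⟩)
  rintro ⟨q, hq⟩ ⟨q', hq'⟩ h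
  obtain ⟨-, h2⟩ := Sigma.ext_iff.mp h
  have := eq_of_heq h2
  simp only [Subtype.mk.injEq] at this
  exact Subtype.ext this

lemma finite_pth_le (X : FCat C) (hft : X.FiniteType) (k : ℕ) (s t : C) (ℓ : ℝ) :
    Finite {q : Pth X k s t // lenP X q ≤ ℓ} := by
  have := finite_sigma_pth X hft k s ℓ
  apply Finite.of_injective (β := Σ t' : C, {q : Pth X k s t' // lenP X q ≤ ℓ})
    (fun z => ⟨t, z⟩)
  rintro z z' h
  obtain ⟨-, h2⟩ := Sigma.ext_iff.mp h
  exact eq_of_heq h2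

end Aux
namespace Aux
variable {C : Type}

/-- Number of non-identity morphisms of a given degree. -/
def nidC (X : FCat C) (s u : C) (y : ℝ) : ℕ :=
  Nat.card {f : X.Hom s u // X.deg f = y ∧ ¬ X.IsIdHom f}

/-- Number of words of given size and length. -/
def pC (X : FCat C) (k : ℕ) (s t : C) (x : ℝ) : ℕ :=
  Nat.card {q : Pth X k s t // lenP X q = x}

lemma finite_hom_subtype (X : FCat C) (hft : X.FiniteType) (s u : C) (P : X.Hom s u → Prop)
    (ℓ : ℝ) (hP : ∀ f, P f → X.deg f ≤ ℓ) : Finite {f : X.Hom s u // P f} := by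
  have h1 : Finite {p : Σ b : C, X.Hom s b | X.deg p.2 ≤ ℓ} := (hft s ℓ).1.to_subtype
  apply Finite.of_injective (β := {p : Σ b : C, X.Hom s b | X.deg p.2 ≤ ℓ})
    (fun f => ⟨⟨u, f.1⟩, by simpa using hP f.1 f.2⟩)
  rintro ⟨f, hf⟩ ⟨g, hg⟩ h
  obtain ⟨-, h2⟩ := Sigma.ext_iff.mp (congrArg Subtype.val h)
  exact Subtype.ext (eq_of_heq h2)

lemma isId_endo_iff (X : FCat C) (s : C) (f : X.Hom s s) : X.IsIdHom f ↔ f = X.id s := by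
  constructor
  · rintro ⟨-, h⟩; exact eq_of_heq h
  · rintro rfl; exact ⟨rfl, HEq.rfl⟩

/-- The entries of `1 - ζ` count non-identity morphisms, negatively. -/
lemma one_sub_zeta (X : FCat C) (hft : X.FiniteType) (s u : C) (y : ℝ) :
    matId C s u y - zeta X s u y = -(nidC X s u y : ℚ) := by
  by_cases hs : s = u
  · subst hs
    by_cases hy : y = 0
    · subst hy
      have hfin : Finite {f : X.Hom s s // X.deg f = 0} :=
        finite_hom_subtype X hft s s _ 0 (fun f hf => le_of_eq hf)
      have key : Nat.card {f : X.Hom s s // X.deg f = 0}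
          = nidC X s s 0 + 1 := by
        have e1 : {f : X.Hom s s // X.deg f = 0}
            ≃ {f : X.Hom s s // X.deg f = 0 ∧ ¬ X.IsIdHom f}
              ⊕ {f : X.Hom s s // X.deg f = 0 ∧ X.IsIdHom f} := by
          refine (Equiv.sumCompl (fun f : {f : X.Hom s s // X.deg f = 0} =>
            X.IsIdHom f.1)).symm.trans (Equiv.sumComm _ _ |>.trans (Equiv.sumCongr ?_ ?_))
          · exact (Equiv.subtypeSubtypeEquivSubtypeInter (fun f => X.deg f = 0)
              (fun f => ¬ X.IsIdHom f)).trans (Equiv.subtypeEquivRight (fun f => by tauto))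
          · exact (Equiv.subtypeSubtypeEquivSubtypeInter (fun f => X.deg f = 0)
              (fun f => X.IsIdHom f)).trans (Equiv.subtypeEquivRight (fun f => by tauto))
        have hfin2 : Finite {f : X.Hom s s // X.deg f = 0 ∧ ¬ X.IsIdHom f} :=
          finite_hom_subtype X hft s s _ 0 (fun f hf => le_of_eq hf.1)
        have hfin3 : Finite {f : X.Hom s s // X.deg f = 0 ∧ X.IsIdHom f} :=
          finite_hom_subtype X hft s s _ 0 (fun f hf => le_of_eq hf.1)
        have e2 : {f : X.Hom s s // X.deg f = 0 ∧ X.IsIdHom f} ≃ PUnit.{1} := by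
          refine Equiv.trans (Equiv.subtypeEquivRight (q := fun f => f = X.id s)
            (fun f => ?_)) ?_
          · constructor
            · rintro ⟨-, h⟩; exact (isId_endo_iff X s f).mp h
            · rintro rfl; exact ⟨X.deg_id s, (isId_endo_iff X s _).mpr rfl⟩
          · exact ⟨fun _ => PUnit.unit, fun _ => ⟨X.id s, rfl⟩,
              by rintro ⟨f, rfl⟩; rfl, fun _ => rfl⟩
        rw [Nat.card_congr e1, Nat.card_sum, Nat.card_congr e2]
        simp [nidC]
      rw [show zeta X s s 0 = (Nat.card {f : X.Hom s s // X.deg f = 0} : ℚ) from rfl, key]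
      simp only [matId]
      push_cast
      norm_num
    · have e : {f : X.Hom s s // X.deg f = y}
          ≃ {f : X.Hom s s // X.deg f = y ∧ ¬ X.IsIdHom f} :=
        (Equiv.subtypeEquivRight (fun f => by
          constructor
          · intro h
            refine ⟨h, fun hid => ?_⟩
            rw [(isId_endo_iff X s f).mp hid] at h
            rw [X.deg_id s] at h
            exact hy h.symm
          · exact fun h => h.1))
      rw [show zeta X s s y = (Nat.card {f : X.Hom s s // X.deg f = y} : ℚ) from rfl,
        Nat.card_congr e]
      simp [matId, nidC, hy]
  · have e : {f : X.Hom s u // X.deg f = y}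
        ≃ {f : X.Hom s u // X.deg f = y ∧ ¬ X.IsIdHom f} :=
      (Equiv.subtypeEquivRight (fun f => by
        constructor
        · exact fun h => ⟨h, fun hid => hs hid.1⟩
        · exact fun h => h.1))
    rw [show zeta X s u y = (Nat.card {f : X.Hom s u // X.deg f = y} : ℚ) from rfl,
      Nat.card_congr e]
    simp [matId, nidC, hs]

end Aux
namespace Aux
variable {C : Type}

/-- Fiberwise counting for finsums. -/
lemma fiber_sum_const {α β : Type} [Finite α] (g : α → β) (c : ℚ) (F : β → ℚ)
    (hF : ∀ b, F b = c * (Nat.card {a : α // g a = b} : ℚ)) :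
    ∑ᶠ b : β, F b = c * (Nat.card α : ℚ) := by
  classical
  have := Fintype.ofFinite α
  set t : Finset β := Finset.image g Finset.univ with ht
  have hsupp : Function.support F ⊆ (t : Set β) := by
    intro b hb
    rw [Function.mem_support, hF b] at hb
    have h0 : Nat.card {a : α // g a = b} ≠ 0 := by
      intro h0; rw [h0] at hb; simp at hb
    have : Nonempty {a : α // g a = b} := by
      by_contra hne
      rw [not_nonempty_iff] at hne
      exact h0 Nat.card_of_isEmpty
    obtain ⟨⟨a, ha⟩⟩ := this
    exact ha ▸ Finset.mem_coe.mpr (Finset.mem_image_of_mem g (Finset.mem_univ a))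
  rw [finsum_eq_sum_of_support_subset F hsupp]
  have hcard : ∀ b, Nat.card {a : α // g a = b}
      = (Finset.univ.filter (fun a : α => g a = b)).card := by
    intro b
    rw [Nat.card_eq_fintype_card, Fintype.card_subtype]
  calc ∑ b ∈ t, F b = ∑ b ∈ t, c * ((Finset.univ.filter (fun a : α => g a = b)).card : ℚ) := by
        refine Finset.sum_congr rfl (fun b _ => ?_)
        rw [hF b, hcard b]
    _ = c * ∑ b ∈ t, ((Finset.univ.filter (fun a : α => g a = b)).card : ℚ) := by
        rw [Finset.mul_sum]
    _ = c * (Nat.card α : ℚ) := by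
        congr 1
        rw [← Nat.cast_sum]
        congr 1
        rw [Nat.card_eq_fintype_card, ← Finset.card_univ]
        exact (Finset.card_eq_sum_card_fiberwise (fun a _ =>
          Finset.mem_image_of_mem g (Finset.mem_univ a))).symm

/-- Generic fiber of a subtype of a sigma type. -/
def sigFib {ι : Type} {B : ι → Type} (P : (Σ i, B i) → Prop) (u : ι) :
    {z : {z : Σ i, B i // P z} // z.1.1 = u} ≃ {b : B u // P ⟨u, b⟩} where
  toFun z := match z with
    | ⟨⟨⟨i, b⟩, hp⟩, hi⟩ => ⟨hi ▸ b, by subst hi; exact hp⟩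
  invFun b := ⟨⟨⟨u, b.1⟩, b.2⟩, rfl⟩
  left_inv := by rintro ⟨⟨⟨i, b⟩, hp⟩, hi⟩; subst hi; rfl
  right_inv := by rintro ⟨b, hp⟩; rfl

/-- Splitting off the first arrow of a word of positive size. -/
def splitEquiv (X : FCat C) (k : ℕ) (s t : C) (x : ℝ) :
    {q : Pth X (k+1) s t // lenP X q = x}
    ≃ {z : Σ u : C, {f : X.Hom s u // ¬ X.IsIdHom f} × Pth X k u t //
        X.deg z.2.1.1 + lenP X z.2.2 = x} :=
  Equiv.subtypeEquiv (pthEquiv X k s t) (fun q => by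
    cases q with | cons f hf r => exact Iff.rfl)

/-- Fibering the decomposition by the degree of the first arrow. -/
def innerFib (X : FCat C) (k : ℕ) (s u t : C) (x y : ℝ) :
    {a : {z : {f : X.Hom s u // ¬ X.IsIdHom f} × Pth X k u t //
        X.deg z.1.1 + lenP X z.2 = x} // X.deg a.1.1.1 = y}
    ≃ {f : X.Hom s u // X.deg f = y ∧ ¬ X.IsIdHom f}
      × {r : Pth X k u t // lenP X r = x - y} where
  toFun := fun ⟨⟨⟨⟨f, hf⟩, r⟩, hz⟩, hy⟩ =>
    (⟨f, by simpa using hy, hf⟩, ⟨r, by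
      simp only at hz hy
      linarith [hz, hy]⟩)
  invFun := fun ⟨⟨f, h1, h2⟩, ⟨r, hr⟩⟩ =>
    ⟨⟨(⟨f, h2⟩, r), by simp only; rw [h1]; linarith [hr]⟩, by simpa using h1⟩
  left_inv := by rintro ⟨⟨⟨⟨f, hf⟩, r⟩, hz⟩, hy⟩; rfl
  right_inv := by rintro ⟨⟨f, h1, h2⟩, ⟨r, hr⟩⟩; rfl

/-- `matPow` of `1 - ζ` counts words, with sign. -/
lemma matPow_eq (X : FCat C) (hft : X.FiniteType) :
    ∀ (k : ℕ) (s t : C) (x : ℝ),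
      matPow C (fun s t x => matId C s t x - zeta X s t x) k s t x
        = (-1 : ℚ)^k * (pC X k s t x : ℚ) := by
  intro k
  induction k with
  | zero =>
    intro s t x
    show matId C s t x = (-1 : ℚ)^0 * (pC X 0 s t x : ℚ)
    rw [pow_zero, one_mul]
    by_cases hs : s = t
    · subst hs
      by_cases hx : x = 0
      · subst hx
        have h1 : Nat.card {q : Pth X 0 s s // lenP X q = 0} = 1 := by
          have hne : Nonempty {q : Pth X 0 s s // lenP X q = 0} := ⟨⟨.nil s, rfl⟩⟩
          have hsub : Subsingleton {q : Pth X 0 s s // lenP X q = 0} := by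
            constructor
            rintro ⟨q, hq⟩ ⟨q', hq'⟩
            cases q; cases q'; rfl
          exact Nat.card_unique
        simp [matId, pC, h1]
      · have : IsEmpty {q : Pth X 0 s s // lenP X q = x} := by
          constructor
          rintro ⟨q, hq⟩
          cases q
          rw [lenP_nil] at hq
          exact hx hq.symm
        simp [matId, pC, Nat.card_of_isEmpty, hx]
    · have : IsEmpty {q : Pth X 0 s t // lenP X q = x} := by
        constructor
        rintro ⟨q, hq⟩
        cases q
        exact hs rfl
      simp [matId, pC, Nat.card_of_isEmpty, hs]
  | succ k ih =>
    intro s t x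
    show matConv C _ _ s t x = _
    have hfinq : Finite {q : Pth X (k+1) s t // lenP X q = x} := finite_pth_eq X hft _ s t x
    have hfinS : Finite {z : Σ u : C, {f : X.Hom s u // ¬ X.IsIdHom f} × Pth X k u t //
        X.deg z.2.1.1 + lenP X z.2.2 = x} :=
      Finite.of_equiv _ (splitEquiv X k s t x)
    have hfinA : ∀ u : C, Finite {z : {f : X.Hom s u // ¬ X.IsIdHom f} × Pth X k u t //
        X.deg z.1.1 + lenP X z.2 = x} := by
      intro u
      haveI := hfinS
      exact Finite.of_equiv _
        (sigFib (fun z : Σ u : C, {f : X.Hom s u // ¬ X.IsIdHom f} × Pth X k u t =>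
          X.deg z.2.1.1 + lenP X z.2.2 = x) u)
    -- inner computation
    have inner : ∀ u : C,
        conv (fun y => matId C s u y - zeta X s u y)
          (matPow C (fun s t x => matId C s t x - zeta X s t x) k u t) x
        = (-1 : ℚ)^(k+1) *
          (Nat.card {z : {f : X.Hom s u // ¬ X.IsIdHom f} × Pth X k u t //
            X.deg z.1.1 + lenP X z.2 = x} : ℚ) := by
      intro u
      have := hfinA u
      apply fiber_sum_const (g := fun z => X.deg z.1.1.1)
      intro y
      show (matId C s u y - zeta X s u y)
        * matPow C (fun s t x => matId C s t x - zeta X s t x) k u t (x - y) = _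
      rw [one_sub_zeta X hft s u y, ih u t (x - y),
        Nat.card_congr (innerFib X k s u t x y), Nat.card_prod]
      show -(nidC X s u y : ℚ) * ((-1:ℚ)^k * (pC X k u t (x-y) : ℚ)) = _
      push_cast [nidC, pC]
      ring
    rw [show matConv C (fun s t x => matId C s t x - zeta X s t x)
        (matPow C (fun s t x => matId C s t x - zeta X s t x) k) s t x
      = ∑ᶠ u : C, conv (fun y => matId C s u y - zeta X s u y)
          (matPow C (fun s t x => matId C s t x - zeta X s t x) k u t) x from rfl]
    rw [finsum_congr inner]
    have main := fiber_sum_const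
      (g := fun z : {z : Σ u : C, {f : X.Hom s u // ¬ X.IsIdHom f} × Pth X k u t //
          X.deg z.2.1.1 + lenP X z.2.2 = x} => z.1.1)
      ((-1 : ℚ)^(k+1))
      (fun u => (-1 : ℚ)^(k+1) *
        (Nat.card {z : {f : X.Hom s u // ¬ X.IsIdHom f} × Pth X k u t //
          X.deg z.1.1 + lenP X z.2 = x} : ℚ))
      (fun u => by rw [Nat.card_congr (sigFib _ u)])
    rw [main, pC, Nat.card_congr (splitEquiv X k s t x)]
end Aux
namespace Aux
variable {C : Type}

/-- The word of arrows of a path. -/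
def wordP (X : FCat C) : ∀ {k s t}, Pth X k s t → List (Σ a b : C, X.Hom a b)
  | _, _, _, .nil _ => []
  | _, _, _, .cons (s := s) (u := u) f _ r => ⟨s, u, f⟩ :: wordP X r

/-- Cast a path along equalities of endpoints. -/
def castP (X : FCat C) {k : ℕ} {s s' t t' : C} (hs : s = s') (ht : t = t')
    (q : Pth X k s t) : Pth X k s' t' := ht ▸ hs ▸ q

@[simp] lemma wordP_castP (X : FCat C) {k : ℕ} {s s' t t' : C} (hs : s = s') (ht : t = t')
    (q : Pth X k s t) : wordP X (castP X hs ht q) = wordP X q := by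
  subst hs; subst ht; rfl

@[simp] lemma lenP_castP (X : FCat C) {k : ℕ} {s s' t t' : C} (hs : s = s') (ht : t = t')
    (q : Pth X k s t) : lenP X (castP X hs ht q) = lenP X q := by
  subst hs; subst ht; rfl

/-- From path data (as in `NDPath`) to a `Pth`, remembering length and word. -/
def toPthAux (X : FCat C) : ∀ (k : ℕ) (obj : Fin (k+1) → C)
    (hom : ∀ i : Fin k, X.Hom (obj i.castSucc) (obj i.succ))
    (_ : ∀ i, ¬ X.IsIdHom (hom i)),
    {q : Pth X k (obj 0) (obj (Fin.last k)) //
      lenP X q = ∑ i : Fin k, X.deg (hom i) ∧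
      wordP X q = List.ofFn (fun i => (⟨obj i.castSucc, obj i.succ, hom i⟩ :
        Σ a b : C, X.Hom a b))}
  | 0, obj, hom, hnon => by
    refine ⟨castP X rfl (congrArg obj (by ext; simp)) (.nil (obj 0)), ?_, ?_⟩
    · simp
    · simp [wordP]
  | (k+1), obj, hom, hnon => by
    obtain ⟨r, hlen, hword⟩ := toPthAux X k (obj ∘ Fin.succ)
      (fun j => FCat.castHom X (congrArg obj (Fin.succ_castSucc j).symm) rfl (hom j.succ))
      (fun j => by simpa using hnon j.succ)
    have hlast : obj (Fin.succ (Fin.last k)) = obj (Fin.last (k+1)) :=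
      congrArg obj (Fin.succ_last k)
    refine ⟨.cons (FCat.castHom X (congrArg obj (Fin.castSucc_zero)) rfl (hom 0))
      (fun hh => hnon 0 ((isId_castHom X _ _ _).mp hh))
      (castP X rfl hlast r), ?_, ?_⟩
    · simp only [lenP_cons', lenP_castP, deg_castHom, hlen]
      rw [Fin.sum_univ_succ]
    · simp only [wordP, wordP_castP, hword, List.ofFn_succ]
      refine congrArg₂ List.cons (sigma_castHom X _ _ _) ?_
      exact congrArg List.ofFn (funext fun j => sigma_castHom X _ _ _)

end Aux
namespace Aux
variable {C : Type}

/-- From a `Pth` to `NDPath`-style data. -/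
def ofPthAux (X : FCat C) : ∀ {k : ℕ} {s t : C} (q : Pth X k s t),
    Σ' (obj : Fin (k+1) → C) (hom : ∀ i : Fin k, X.Hom (obj i.castSucc) (obj i.succ)),
      obj 0 = s ∧ obj (Fin.last k) = t ∧ (∀ i, ¬ X.IsIdHom (hom i)) ∧
      ∑ i : Fin k, X.deg (hom i) = lenP X q
  | _, _, _, .nil s => ⟨fun _ => s, fun i => i.elim0, rfl, rfl, fun i => i.elim0, by simp⟩
  | _, _, _, .cons (k := k) (s := s) (u := u) (t := t) f hf r => by
    obtain ⟨o, h, h0, hl, hn, hlen⟩ := ofPthAux X r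
    refine ⟨Fin.cons s o, fun i => Fin.cases
      (FCat.castHom X (by simp) (by simp [h0]) f)
      (fun j => FCat.castHom X
        (by rw [← Fin.succ_castSucc]; simp) (by simp) (h j)) i,
      by simp, ?_, ?_, ?_⟩
    · rw [← Fin.succ_last]; simpa using hl
    · intro i
      refine Fin.cases ?_ (fun j => ?_) i
      · exact fun hh => hf ((isId_castHom X (by simp) (by simp [h0]) f).mp hh)
      · exact fun hh => hn j ((isId_castHom X (by rw [← Fin.succ_castSucc]; simp) (by simp) (h j)).mp hh)
    · rw [Fin.sum_univ_succ]
      rw [lenP_cons', ← hlen]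
      congr 1
      · exact deg_castHom X (by simp) (by simp [h0]) f

/-- The `NDPath` associated to a nonempty `Pth`. -/
def toND (X : FCat C) {k : ℕ} {s t : C} (hk : 0 < k) (q : Pth X k s t) : NDPath X s t :=
  ⟨k, hk, (ofPthAux X q).1, (ofPthAux X q).2.1, (ofPthAux X q).2.2.1, (ofPthAux X q).2.2.2.1,
    (ofPthAux X q).2.2.2.2.1⟩

@[simp] lemma toND_n (X : FCat C) {k : ℕ} {s t : C} (hk : 0 < k) (q : Pth X k s t) :
    (toND X hk q).n = k := rfl

@[simp] lemma toND_length (X : FCat C) {k : ℕ} {s t : C} (hk : 0 < k) (q : Pth X k s t) :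
    (toND X hk q).length = lenP X q := (ofPthAux X q).2.2.2.2.2

/-- Truncation of words. -/
lemma trunc (X : FCat C) {k : ℕ} {s t : C} (q : Pth X k s t) :
    ∀ N : ℕ, N ≤ k → ∃ (t' : C) (r : Pth X N s t'), lenP X r ≤ lenP X q := by
  induction q with
  | nil s =>
    intro N hN
    interval_cases N
    exact ⟨s, .nil s, le_refl _⟩
  | cons f hf r ih =>
    intro N hN
    match N with
    | 0 =>
      refine ⟨_, .nil _, ?_⟩
      simpa [lenP_cons'] using add_nonneg (X.deg_nonneg f) (lenP_nonneg X r)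
    | (N+1) =>
      obtain ⟨t', r', hr'⟩ := ih N (Nat.succ_le_succ_iff.mp hN)
      exact ⟨t', .cons f hf r', by simp only [lenP_cons']; linarith⟩

/-- The `Pth` associated to an `NDPath`. -/
def toPth (X : FCat C) {s t : C} (p : NDPath X s t) : Pth X p.n s t :=
  castP X p.src p.tgt (toPthAux X p.n p.obj p.hom p.nonid).1

lemma lenP_toPth (X : FCat C) {s t : C} (p : NDPath X s t) :
    lenP X (toPth X p) = p.length := by
  simp [toPth, (toPthAux X p.n p.obj p.hom p.nonid).2.1, NDPath.length]

lemma wordP_toPth (X : FCat C) {s t : C} (p : NDPath X s t) :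
    wordP X (toPth X p) = List.ofFn (fun i => (⟨p.obj i.castSucc, p.obj i.succ, p.hom i⟩ :
      Σ a b : C, X.Hom a b)) := by
  simp [toPth, (toPthAux X p.n p.obj p.hom p.nonid).2.2]

/-- Injectivity of `toPth` (jointly with size). -/
lemma toPth_inj (X : FCat C) {s t : C} (p p' : NDPath X s t) (hn : p.n = p'.n)
    (hq : HEq (toPth X p) (toPth X p')) : p = p' := by
  have hword : wordP X (toPth X p) = wordP X (toPth X p') := by
    obtain ⟨n, npos, obj, hom, src, tgt, nonid⟩ := p
    obtain ⟨n', npos', obj', hom', src', tgt', nonid'⟩ := p'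
    simp only at hn
    subst hn
    rw [eq_of_heq hq]
  rw [wordP_toPth, wordP_toPth] at hword
  obtain ⟨n, npos, obj, hom, src, tgt, nonid⟩ := p
  obtain ⟨n', npos', obj', hom', src', tgt', nonid'⟩ := p'
  simp only at hn hword
  subst hn
  rw [List.ofFn_inj] at hword
  have hobj : obj = obj' := by
    funext j
    refine Fin.lastCases ?_ (fun i => ?_) j
    · rw [tgt, tgt']
    · have := congrFun hword i
      exact congrArg (fun z : Σ a b : C, X.Hom a b => z.1) this
  subst hobj
  have hhom : hom = hom' := by
    funext i
    have := congrFun hword i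
    obtain ⟨h1, h2⟩ := Sigma.ext_iff.mp this
    obtain ⟨h3, h4⟩ := Sigma.ext_iff.mp (eq_of_heq h2)
    exact eq_of_heq h4
  subst hhom
  rfl

end Aux
namespace Aux
variable {C : Type}

/-- Partial sums of the series. -/
def SS (X : FCat C) (n : ℕ) (s t : C) (x : ℝ) : ℚ :=
  ∑ k ∈ Finset.range (n + 1),
    matPow C (fun s t x => matId C s t x - zeta X s t x) k s t x

lemma pC_eq_zero_of_neg (X : FCat C) {k : ℕ} {s t : C} {x : ℝ} (hx : x < 0) :
    pC X k s t x = 0 := by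
  have : IsEmpty {q : Pth X k s t // lenP X q = x} := by
    constructor
    rintro ⟨q, hq⟩
    exact absurd (hq ▸ lenP_nonneg X q) (not_le.mpr hx)
  exact Nat.card_of_isEmpty

lemma SS_neg (X : FCat C) (hft : X.FiniteType) {n : ℕ} {s t : C} {x : ℝ} (hx : x < 0) :
    SS X n s t x = 0 := by
  unfold SS
  refine Finset.sum_eq_zero (fun k _ => ?_)
  rw [matPow_eq X hft k s t x, pC_eq_zero_of_neg X hx]
  simp

lemma SS_stab (X : FCat C) (hft : X.FiniteType) {s t : C} {x : ℝ} {K : ℕ}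
    (h : ∀ k, K ≤ k → pC X k s t x = 0) :
    ∀ n, K ≤ n → SS X n s t x = SS X K s t x := by
  intro n hn
  induction n with
  | zero => rw [Nat.le_zero.mp hn]
  | succ n ih =>
    rcases Nat.lt_or_ge K (n+1) with h1 | h1
    · have h2 : K ≤ n := Nat.lt_succ_iff.mp h1
      rw [show SS X (n+1) s t x = SS X n s t x
          + matPow C (fun s t x => matId C s t x - zeta X s t x) (n+1) s t x from
        Finset.sum_range_succ _ _, ih h2, matPow_eq X hft (n+1) s t x, h (n+1) (le_of_lt h1)]
      simp
    · rw [Nat.le_antisymm hn h1]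

lemma SS_two (X : FCat C) (hft : X.FiniteType) {s t : C} {x : ℝ} {K1 K2 : ℕ}
    (h1 : ∀ k, K1 ≤ k → pC X k s t x = 0) (h2 : ∀ k, K2 ≤ k → pC X k s t x = 0) :
    SS X K1 s t x = SS X K2 s t x := by
  rw [← SS_stab X hft h1 (max K1 K2) (le_max_left _ _),
    SS_stab X hft h2 (max K1 K2) (le_max_right _ _)]

/-- Vanishing of large powers from quasi-tameness. -/
lemma vanish_of_qt (X : FCat C) {s t : C} {ℓ : ℝ}
    (hq : {p : NDPath X s t | p.length ≤ ℓ}.Finite) :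
    ∃ K : ℕ, ∀ k, K ≤ k → ∀ x ≤ ℓ, pC X k s t x = 0 := by
  classical
  refine ⟨(hq.toFinset.image (fun p => p.n)).sup id + 1, fun k hk x hx => ?_⟩
  have : IsEmpty {q : Pth X k s t // lenP X q = x} := by
    constructor
    rintro ⟨q, hq'⟩
    have hkpos : 0 < k := lt_of_lt_of_le (Nat.succ_pos _) hk
    have hmem : toND X hkpos q ∈ hq.toFinset := by
      rw [Set.Finite.mem_toFinset]
      show (toND X hkpos q).length ≤ ℓ
      rw [toND_length, hq']
      exact hx
    have : k ≤ (hq.toFinset.image (fun p => p.n)).sup id := by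
      refine Finset.le_sup (f := id) ?_
      exact Finset.mem_image_of_mem _ hmem
    omega
  exact Nat.card_of_isEmpty

/-- Vanishing of large powers from tameness. -/
lemma vanish_of_tame (X : FCat C) {ℓ : ℝ} {N : ℕ} (hN : 0 < N)
    (h : ∀ (a b : C) (p : NDPath X a b), p.n = N → ℓ < p.length) :
    ∀ k, N ≤ k → ∀ (s t : C) (x : ℝ), x ≤ ℓ → pC X k s t x = 0 := by
  intro k hk s t x hx
  have : IsEmpty {q : Pth X k s t // lenP X q = x} := by
    constructor
    rintro ⟨q, hq⟩
    obtain ⟨t', r, hr⟩ := trunc X q N hk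
    have := h s t' (toND X hN r) rfl
    rw [toND_length] at this
    rw [hq] at hr
    linarith
  exact Nat.card_of_isEmpty

/-- Finiteness of bounded-length non-degenerate paths from vanishing. -/
lemma ndpath_finite (X : FCat C) (hft : X.FiniteType) {s t : C} {ℓ : ℝ} {N : ℕ}
    (h : ∀ k, N ≤ k → ∀ x ≤ ℓ, pC X k s t x = 0) :
    {p : NDPath X s t | p.length ≤ ℓ}.Finite := by
  haveI : ∀ i : Fin (N+1), Finite {q : Pth X i.1 s t // lenP X q ≤ ℓ} :=
    fun i => finite_pth_le X hft i.1 s t ℓ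
  have key : ∀ p : {p : NDPath X s t // p.length ≤ ℓ}, p.1.n < N + 1 := by
    rintro ⟨p, hp⟩
    show p.n < N + 1
    by_contra hlt
    have hn : N ≤ p.n := by omega
    have h0 := h p.n hn p.length hp
    haveI : Finite {q : Pth X p.n s t // lenP X q = p.length} :=
      finite_pth_eq X hft p.n s t p.length
    haveI : Nonempty {q : Pth X p.n s t // lenP X q = p.length} :=
      ⟨⟨toPth X p, lenP_toPth X p⟩⟩
    exact (Nat.card_ne_zero.mpr ⟨‹_›, ‹_›⟩) h0
  rw [← Set.finite_coe_iff]
  apply Finite.of_injective (β := Σ i : Fin (N+1), {q : Pth X i.1 s t // lenP X q ≤ ℓ})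
    (fun p => ⟨⟨p.1.n, key p⟩, ⟨toPth X p.1, by rw [lenP_toPth]; exact p.2⟩⟩)
  rintro ⟨p, hp⟩ ⟨p', hp'⟩ hh
  obtain ⟨h1, h2⟩ := Sigma.ext_iff.mp hh
  have hn : p.n = p'.n := congrArg Fin.val h1
  refine Subtype.ext (toPth_inj X p p' hn ?_)
  -- extract the HEq of values
  have : ∀ (k k' : ℕ) (hk : k = k') (a : {q : Pth X k s t // lenP X q ≤ ℓ})
      (b : {q : Pth X k' s t // lenP X q ≤ ℓ}), HEq a b → HEq a.1 b.1 := by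
    rintro k k' rfl a b hab
    rw [eq_of_heq hab]
  exact this p.n p'.n hn _ _ h2

end Aux
namespace Aux
variable {C : Type}

lemma exists_word_of_SS_ne (X : FCat C) (hft : X.FiniteType) {n : ℕ} {s t : C} {x : ℝ}
    (h : SS X n s t x ≠ 0) :
    ∃ k : ℕ, k ≤ n ∧ Nonempty {q : Pth X k s t // lenP X q = x} := by
  obtain ⟨k, hk, hne⟩ := Finset.exists_ne_zero_of_sum_ne_zero h
  rw [matPow_eq X hft k s t x] at hne
  have : (pC X k s t x : ℚ) ≠ 0 := by
    intro h0
    rw [h0, mul_zero] at hne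
    exact hne rfl
  have : pC X k s t x ≠ 0 := fun h0 => this (by rw [h0]; norm_num)
  exact ⟨k, Nat.lt_succ_iff.mp (Finset.mem_range.mp hk), (Nat.card_ne_zero.mp this).1⟩

end Aux

open Aux

/-- Let `C` be a `CFset`-category of finite type.  Then `C` is tame iff the series
`∑_{n≥0} (1 - ζ_C)^n` converges in the complete normed ring `M_C(A)` (i.e. the partial
sums eventually agree with some `L ∈ M_C(A)` modulo each ideal `m_ℓ`, uniformly in the
entries); and `C` is quasi-tame iff for every pair of objects `a, b` the series
`∑_{n≥0} (1 - ζ_C)^n(a,b)` converges in `A`. -/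
theorem stmt4 (X : FCat C) (hft : X.FiniteType) :
    (Tame X ↔ ∃ L : C → C → ℝ → ℚ, (∀ s t : C, IsNov (L s t)) ∧ MSmat C L ∧
      ∀ ℓ : ℝ, ∃ N : ℕ, ∀ n ≥ N, ∀ (s t : C) (x : ℝ), x < ℓ →
        (∑ k ∈ Finset.range (n + 1),
          matPow C (fun s t x => matId C s t x - zeta X s t x) k s t x) = L s t x) ∧
    (QuasiTame X ↔ ∀ s t : C, ∃ L : ℝ → ℚ, IsNov L ∧
      ∀ ℓ : ℝ, ∃ N : ℕ, ∀ n ≥ N, ∀ x : ℝ, x < ℓ →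
        (∑ k ∈ Finset.range (n + 1),
          matPow C (fun s t x => matId C s t x - zeta X s t x) k s t x) = L x) := by
  constructor
  · -- Tame ↔ convergence in M_C(A)
    constructor
    · rintro ⟨-, htame⟩
      choose N hNpos hNspec using htame
      have vanish : ∀ ℓ : ℝ, ∀ k, N ℓ ≤ k → ∀ (s t : C) (x : ℝ), x ≤ ℓ →
          pC X k s t x = 0 := fun ℓ => vanish_of_tame X (hNpos ℓ) (hNspec ℓ)
      refine ⟨fun s t x => SS X (N (x+1)) s t x, ?_, ?_, ?_⟩
      · -- each entry is Novikov
        intro s t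
        constructor
        · intro ℓ
          haveI : ∀ i : Fin (N ℓ + 1), Finite {q : Pth X i.1 s t // lenP X q ≤ ℓ} :=
            fun i => finite_pth_le X hft i.1 s t ℓ
          refine (Set.finite_range (fun z : Σ i : Fin (N ℓ + 1),
            {q : Pth X i.1 s t // lenP X q ≤ ℓ} => lenP X z.2.1)).subset ?_
          rintro x ⟨hxl, hx0'⟩
          have hx0 : SS X (N ℓ) s t x ≠ 0 := by
            have h' : SS X (N (x+1)) s t x ≠ 0 := hx0'
            rwa [SS_two X hft (fun k hk => vanish (x+1) k hk s t x (by linarith))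
              (fun k hk => vanish ℓ k hk s t x hxl)] at h'
          obtain ⟨k, hkle, ⟨⟨q, hq⟩⟩⟩ := exists_word_of_SS_ne X hft hx0
          exact ⟨⟨⟨k, by omega⟩, ⟨q, by rw [hq]; exact hxl⟩⟩, hq⟩
        · intro x hx
          exact SS_neg X hft hx
      · -- M_C(A) membership
        intro ℓ s
        constructor
        · haveI : ∀ i : Fin (N ℓ + 1),
              Finite (Σ t' : C, {q : Pth X i.1 s t' // lenP X q ≤ ℓ}) :=
            fun i => finite_sigma_pth X hft i.1 s ℓ
          refine (Set.finite_range (fun z : Σ i : Fin (N ℓ + 1),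
            Σ t' : C, {q : Pth X i.1 s t' // lenP X q ≤ ℓ} => z.2.1)).subset ?_
          rintro t ⟨x, hxlt, hne'⟩
          have hne : SS X (N ℓ) s t x ≠ 0 := by
            have h' : SS X (N (x+1)) s t x ≠ 0 := hne'
            rwa [SS_two X hft (fun k hk => vanish (x+1) k hk s t x (by linarith))
              (fun k hk => vanish ℓ k hk s t x (le_of_lt hxlt))] at h'
          obtain ⟨k, hkle, ⟨⟨q, hq⟩⟩⟩ := exists_word_of_SS_ne X hft hne
          exact ⟨⟨⟨k, by omega⟩, ⟨t, ⟨q, by rw [hq]; exact le_of_lt hxlt⟩⟩⟩, rfl⟩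
        · haveI : ∀ i : Fin (N ℓ + 1),
              Finite (Σ t' : C, {q : Pth X i.1 t' s // lenP X q ≤ ℓ}) :=
            fun i => finite_sigma_pth' X hft i.1 s ℓ
          refine (Set.finite_range (fun z : Σ i : Fin (N ℓ + 1),
            Σ t' : C, {q : Pth X i.1 t' s // lenP X q ≤ ℓ} => z.2.1)).subset ?_
          rintro t ⟨x, hxlt, hne'⟩
          have hne : SS X (N ℓ) t s x ≠ 0 := by
            have h' : SS X (N (x+1)) t s x ≠ 0 := hne'
            rwa [SS_two X hft (fun k hk => vanish (x+1) k hk t s x (by linarith))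
              (fun k hk => vanish ℓ k hk t s x (le_of_lt hxlt))] at h'
          obtain ⟨k, hkle, ⟨⟨q, hq⟩⟩⟩ := exists_word_of_SS_ne X hft hne
          exact ⟨⟨⟨k, by omega⟩, ⟨t, ⟨q, by rw [hq]; exact le_of_lt hxlt⟩⟩⟩, rfl⟩
      · -- convergence
        intro ℓ
        refine ⟨N ℓ, fun n hn s t x hx => ?_⟩
        show SS X n s t x = SS X (N (x+1)) s t x
        rw [SS_stab X hft (fun k hk => vanish ℓ k hk s t x (le_of_lt hx)) n hn]
        exact SS_two X hft (fun k hk => vanish ℓ k hk s t x (le_of_lt hx))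
          (fun k hk => vanish (x+1) k hk s t x (by linarith))
    · rintro ⟨L, hNov, hMS, hconv⟩
      refine ⟨hft, fun ℓ => ?_⟩
      obtain ⟨N, hN⟩ := hconv (ℓ + 1)
      have vanish : ∀ k, N + 1 ≤ k → ∀ (s t : C) (x : ℝ), x ≤ ℓ → pC X k s t x = 0 := by
        intro k hk s t x hx
        obtain ⟨m, rfl⟩ : ∃ m, k = m + 1 := ⟨k - 1, by omega⟩
        have e1 : SS X (m+1) s t x = L s t x := hN (m+1) (by omega) s t x (by linarith)
        have e2 : SS X m s t x = L s t x := hN m (by omega) s t x (by linarith)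
        have hz : matPow C (fun s t x => matId C s t x - zeta X s t x) (m+1) s t x = 0 := by
          have hsum : SS X (m+1) s t x = SS X m s t x
              + matPow C (fun s t x => matId C s t x - zeta X s t x) (m+1) s t x :=
            Finset.sum_range_succ _ _
          rw [e1, e2] at hsum
          linarith
        rw [matPow_eq X hft (m+1) s t x] at hz
        have : (pC X (m+1) s t x : ℚ) = 0 := by
          rcases mul_eq_zero.mp hz with h | h
          · exact absurd h (pow_ne_zero _ (by norm_num))
          · exact h
        exact Nat.cast_eq_zero.mp this
      refine ⟨N + 1, Nat.succ_pos _, fun a b p hp => ?_⟩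
      by_contra hle
      push_neg at hle
      have h0 := vanish p.n (by omega) a b p.length hle
      haveI : Finite {q : Pth X p.n a b // lenP X q = p.length} :=
        finite_pth_eq X hft p.n a b p.length
      haveI : Nonempty {q : Pth X p.n a b // lenP X q = p.length} :=
        ⟨⟨toPth X p, lenP_toPth X p⟩⟩
      exact (Nat.card_ne_zero.mpr ⟨‹_›, ‹_›⟩) h0
  · -- QuasiTame ↔ entrywise convergence
    constructor
    · rintro ⟨-, hq⟩
      intro s t
      have key : ∀ ℓ : ℝ, ∃ K : ℕ, ∀ k, K ≤ k → ∀ x ≤ ℓ, pC X k s t x = 0 :=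
        fun ℓ => vanish_of_qt X (hq s t ℓ)
      choose K hK using key
      refine ⟨fun x => SS X (K (x+1)) s t x, ⟨?_, ?_⟩, ?_⟩
      · intro ℓ
        refine ((hq s t ℓ).image NDPath.length |>.insert 0).subset ?_
        rintro x ⟨hxl, hx0'⟩
        have hx0 : SS X (K ℓ) s t x ≠ 0 := by
          have h' : SS X (K (x+1)) s t x ≠ 0 := hx0'
          rwa [SS_two X hft (fun k hk => hK (x+1) k hk x (by linarith))
            (fun k hk => hK ℓ k hk x hxl)] at h'
        obtain ⟨k, hkle, ⟨⟨q, hq'⟩⟩⟩ := exists_word_of_SS_ne X hft hx0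
        match k, q with
        | 0, q =>
          cases q
          left
          rw [← hq']
          rfl
        | (m+1), q =>
          right
          refine ⟨toND X (Nat.succ_pos m) q, ?_, ?_⟩
          · show (toND X (Nat.succ_pos m) q).length ≤ ℓ
            rw [toND_length, hq']
            exact hxl
          · rw [toND_length, hq']
      · intro x hx
        exact SS_neg X hft hx
      · intro ℓ
        refine ⟨K ℓ, fun n hn x hx => ?_⟩
        show SS X n s t x = SS X (K (x+1)) s t x
        rw [SS_stab X hft (fun k hk => hK ℓ k hk x (le_of_lt hx)) n hn]
        exact SS_two X hft (fun k hk => hK ℓ k hk x (le_of_lt hx))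
          (fun k hk => hK (x+1) k hk x (by linarith))
    · intro h
      refine ⟨hft, fun s t ℓ => ?_⟩
      obtain ⟨L, hNovL, hconv⟩ := h s t
      obtain ⟨N, hN⟩ := hconv (ℓ + 1)
      have vanish : ∀ k, N + 1 ≤ k → ∀ x ≤ ℓ, pC X k s t x = 0 := by
        intro k hk x hx
        obtain ⟨m, rfl⟩ : ∃ m, k = m + 1 := ⟨k - 1, by omega⟩
        have e1 : SS X (m+1) s t x = L x := hN (m+1) (by omega) x (by linarith)
        have e2 : SS X m s t x = L x := hN m (by omega) x (by linarith)
        have hz : matPow C (fun s t x => matId C s t x - zeta X s t x) (m+1) s t x = 0 := by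
          have hsum : SS X (m+1) s t x = SS X m s t x
              + matPow C (fun s t x => matId C s t x - zeta X s t x) (m+1) s t x :=
            Finset.sum_range_succ _ _
          rw [e1, e2] at hsum
          linarith
        rw [matPow_eq X hft (m+1) s t x] at hz
        have : (pC X (m+1) s t x : ℚ) = 0 := by
          rcases mul_eq_zero.mp hz with h' | h'
          · exact absurd h' (pow_ne_zero _ (by norm_num))
          · exact h'
        exact Nat.cast_eq_zero.mp this
      exact ndpath_finite X hft vanish
end
end

section
/- A generalized metric space X of finite type is quasi-tame (as a filtered-set enriched category) if and only if X is non-degenerate, i.e., d(x,y) = d(y,x) = 0 implies x = y. -/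
noncomputable section
open Classical

variable {C : Type}

/-- A generalized metric space `(X, d)`, viewed as a category enriched in filtered sets:
there is one morphism `x → y` of degree `d(x,y)` whenever `d(x,y) < ∞`, and none
otherwise. -/
def gmsToFCat (X : Type) (d : X → X → ENNReal)
    (h0 : ∀ x, d x x = 0)
    (htri : ∀ x y z, d x z ≤ d x y + d y z) : FCat X where
  Hom x y := PLift (d x y ≠ ⊤)
  deg {x y} _ := (d x y).toReal
  id x := ⟨by simp [h0 x]⟩
  comp {x y z} f g := ⟨by
    intro h
    have hle := htri x y z
    rw [h] at hle
    have : d x y + d y z = ⊤ := top_le_iff.mp hle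
    rcases ENNReal.add_eq_top.mp this with h' | h'
    · exact f.down h'
    · exact g.down h'⟩
  id_comp _ := Subsingleton.elim _ _
  comp_id _ := Subsingleton.elim _ _
  assoc _ _ _ := Subsingleton.elim _ _
  deg_nonneg _ := ENNReal.toReal_nonneg
  deg_id x := by simp [h0 x]
  deg_comp {x y z} f g := by
    have h2 : d x y + d y z ≠ ⊤ := ENNReal.add_ne_top.mpr ⟨f.down, g.down⟩
    calc (d x z).toReal ≤ (d x y + d y z).toReal := ENNReal.toReal_mono h2 (htri x y z)
      _ = (d x y).toReal + (d y z).toReal := ENNReal.toReal_add f.down g.down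


/-- Extensionality for non-degenerate paths when homs are subsingletons. -/
lemma ndpath_ext {C : Type} {F : FCat C} {a b : C}
    (hsub : ∀ (x y : C) (f g : F.Hom x y), f = g)
    (p q : NDPath F a b) (hn : p.n = q.n)
    (h : ∀ (i : ℕ) (hi : i < p.n + 1) (hi' : i < q.n + 1), p.obj ⟨i, hi⟩ = q.obj ⟨i, hi'⟩) :
    p = q := by
  obtain ⟨n, npos, obj, hom, src, tgt, nonid⟩ := p
  obtain ⟨n', npos', obj', hom', src', tgt', nonid'⟩ := q
  dsimp only at hn h ⊢
  subst hn
  have hobj : obj = obj' := by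
    funext i
    have := h i.1 i.2 i.2
    simpa using this
  subst hobj
  have hhom : hom = hom' := funext fun i => hsub _ _ _ _
  subst hhom
  rfl

/-- Construct a morphism in the GMS category. -/
def mkHom {X : Type} {d : X → X → ENNReal} {h0 : ∀ x, d x x = 0}
    {htri : ∀ x y z, d x z ≤ d x y + d y z} {u v : X} (h : d u v ≠ ⊤) :
    (gmsToFCat X d h0 htri).Hom u v := PLift.up h

/-- A generalized metric space `X` of finite type is quasi-tame (as a filtered-set
enriched category) iff it is non-degenerate: `d(x,y) = d(y,x) = 0` implies `x = y`. -/
theorem stmt8 (X : Type) (d : X → X → ENNReal)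
    (h0 : ∀ x, d x x = 0) (htri : ∀ x y z, d x z ≤ d x y + d y z)
    (hft : (gmsToFCat X d h0 htri).FiniteType) :
    QuasiTame (gmsToFCat X d h0 htri) ↔
      ∀ x y : X, d x y = 0 → d y x = 0 → x = y := by
  classical
  set F := gmsToFCat X d h0 htri with hF
  have hsub : ∀ (u v : X) (f g : F.Hom u v), f = g := by
    intro u v f g
    cases f; cases g; rfl
  have hdown : ∀ (u v : X) (f : F.Hom u v), d u v ≠ ⊤ := fun u v f => f.down
  have hdeg : ∀ (u v : X) (f : F.Hom u v), F.deg f = (d u v).toReal := fun _ _ _ => rfl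
  have hid : ∀ (u v : X) (h : u = v) (f : F.Hom u v), F.IsIdHom f := by
    rintro u v rfl f
    exact ⟨rfl, heq_of_eq (hsub u u f (F.id u))⟩
  constructor
  · -- quasi-tame implies non-degenerate
    intro hqt x y hxy hyx
    by_contra hne
    have paths : ∀ m : ℕ, ∃ p : NDPath F x y, p.n = 2*m+1 ∧ p.length ≤ 0 := by
      intro m
      set obj : Fin (2*m+1+1) → X := fun j => if j.1 % 2 = 0 then x else y with hobj
      have hcs : ∀ i : Fin (2*m+1), obj i.castSucc = if i.1 % 2 = 0 then x else y := by
        intro i; simp only [hobj, Fin.coe_castSucc]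
      have hsc : ∀ i : Fin (2*m+1), obj i.succ = if (i.1+1) % 2 = 0 then x else y := by
        intro i; simp only [hobj, Fin.val_succ]
      have hd0 : ∀ i : Fin (2*m+1), d (obj i.castSucc) (obj i.succ) = 0 := by
        intro i
        rcases Nat.mod_two_eq_zero_or_one i.1 with hm | hm
        · rw [hcs i, hsc i, if_pos hm, if_neg (by omega)]
          exact hxy
        · rw [hcs i, hsc i, if_neg (by omega), if_pos (by omega)]
          exact hyx
      have hdne : ∀ i : Fin (2*m+1), d (obj i.castSucc) (obj i.succ) ≠ ⊤ := by
        intro i; rw [hd0 i]; exact ENNReal.zero_ne_top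
      refine ⟨⟨2*m+1, by omega, obj, fun i => mkHom (hdne i), ?_, ?_, ?_⟩, rfl, ?_⟩
      · show (if (0 : Fin (2*m+1+1)).1 % 2 = 0 then x else y) = x
        rw [if_pos (by simp)]
      · show (if (Fin.last (2*m+1)).1 % 2 = 0 then x else y) = y
        rw [if_neg (by simp [Fin.last])]
      · rintro i ⟨hEq, -⟩
        rcases Nat.mod_two_eq_zero_or_one i.1 with hm | hm
        · rw [hcs i, hsc i, if_pos hm, if_neg (by omega)] at hEq
          exact hne hEq
        · rw [hcs i, hsc i, if_neg (by omega), if_pos (by omega)] at hEq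
          exact hne hEq.symm
      · rw [NDPath.length]
        apply le_of_eq
        apply Finset.sum_eq_zero
        intro i _
        show (d (obj i.castSucc) (obj i.succ)).toReal = 0
        rw [hd0 i]
        simp
    choose f hf using paths
    have hinf : {p : NDPath F x y | p.length ≤ 0}.Infinite := by
      apply Set.infinite_of_injective_forall_mem (f := f)
      · intro m m' h
        have h1 := (hf m).1
        have h2 := (hf m').1
        rw [h, h2] at h1
        omega
      · exact fun m => (hf m).2
    exact hinf (hqt.2 x y 0)
  · -- non-degenerate implies quasi-tame
    intro hnd
    refine ⟨hft, ?_⟩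
    intro a b ℓ
    -- the finite vertex set
    set S : Set X := {c | d a c ≠ ⊤ ∧ (d a c).toReal ≤ ℓ} with hSdef
    have hS : S.Finite := by
      have h1 := (hft a ℓ).1
      apply (h1.image (fun p : Σ c : X, F.Hom a c => p.1)).subset
      intro c hc
      exact ⟨⟨c, mkHom hc.1⟩, hc.2, rfl⟩
    -- a lower bound for positive distances within S
    obtain ⟨ε, hε0, hεle⟩ : ∃ ε : ℝ, 0 < ε ∧
        ∀ u ∈ S, ∀ v ∈ S, 0 < (d u v).toReal → ε ≤ (d u v).toReal := by
      set V : Set ℝ := {r : ℝ | 0 < r ∧ ∃ u ∈ S, ∃ v ∈ S, (d u v).toReal = r} with hVdef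
      have hV : V.Finite := by
        apply ((hS.prod hS).image (fun q : X × X => (d q.1 q.2).toReal)).subset
        rintro r ⟨-, u, hu, v, hv, hrv⟩
        exact ⟨(u, v), ⟨hu, hv⟩, hrv⟩
      by_cases hVe : V.Nonempty
      · have hne' : hV.toFinset.Nonempty := by
          rwa [Set.Finite.toFinset_nonempty]
        refine ⟨hV.toFinset.min' hne', ?_, ?_⟩
        · have hmem := hV.toFinset.min'_mem hne'
          rw [Set.Finite.mem_toFinset] at hmem
          exact hmem.1
        · intro u hu v hv hpos
          apply Finset.min'_le
          rw [Set.Finite.mem_toFinset]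
          exact ⟨hpos, u, hu, v, hv, rfl⟩
      · refine ⟨1, one_pos, fun u hu v hv hpos => absurd ?_ hVe⟩
        exact ⟨(d u v).toReal, hpos, u, hu, v, hv, rfl⟩
    set M := hS.toFinset.card with hM
    set rk : X → ℕ := fun c => (hS.toFinset.filter (fun z => d z c = 0)).card with hrkdef
    have hrk_le : ∀ c, rk c ≤ M := fun c => Finset.card_le_card (Finset.filter_subset _ _)
    have hrk_lt : ∀ u ∈ S, ∀ v ∈ S, d u v = 0 → u ≠ v → rk u < rk v := by
      intro u hu v hv huv hneuv
      apply Finset.card_lt_card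
      constructor
      · intro z hz
        rw [Finset.mem_filter] at hz ⊢
        refine ⟨hz.1, ?_⟩
        have h1 := htri z u v
        rw [hz.2, huv, add_zero] at h1
        exact le_zero_iff.mp h1
      · intro hcon
        have hvv : v ∈ hS.toFinset.filter (fun z => d z v = 0) := by
          rw [Finset.mem_filter, Set.Finite.mem_toFinset]
          exact ⟨hv, h0 v⟩
        have := hcon hvv
        rw [Finset.mem_filter] at this
        exact hneuv (hnd u v huv this.2)
    set K := ⌈ℓ / ε⌉₊ with hK
    set N := (K+1) * (M+1) with hN
    -- the key bound
    have key : ∀ p : NDPath F a b, p.length ≤ ℓ →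
        p.n < N ∧ ∀ (i : ℕ) (hi : i < p.n + 1), p.obj ⟨i, hi⟩ ∈ S := by
      intro p hp
      set n := p.n with hn
      set o : ℕ → X := fun m => if h : m < n + 1 then p.obj ⟨m, h⟩ else a with ho
      have ho_eq : ∀ (m : ℕ) (h : m < n + 1), o m = p.obj ⟨m, h⟩ := fun m h => dif_pos h
      set e : ℕ → ENNReal := fun j => d (o j) (o (j+1)) with he
      have hcs : ∀ (i : Fin n), i.castSucc = (⟨i.1, by omega⟩ : Fin (n+1)) := fun i => rfl
      have hsc : ∀ (i : Fin n), i.succ = (⟨i.1+1, by omega⟩ : Fin (n+1)) := fun i => rfl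
      have he_eq : ∀ (i : Fin n), e i.1 = d (p.obj i.castSucc) (p.obj i.succ) := by
        intro i
        rw [he]
        dsimp only
        rw [ho_eq i.1 (by omega), ho_eq (i.1+1) (by omega), hcs i, hsc i]
      have he_ne : ∀ j, (hj : j < n) → e j ≠ ⊤ := by
        intro j hj
        rw [he_eq ⟨j, hj⟩]
        exact hdown _ _ (p.hom ⟨j, hj⟩)
      have hlen : p.length = ∑ j ∈ Finset.range n, (e j).toReal := by
        rw [NDPath.length, ← Fin.sum_univ_eq_sum_range (fun j => (e j).toReal) n]
        apply Finset.sum_congr rfl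
        intro i _
        rw [he_eq i, hdeg]
      have hsum_ne : (∑ j ∈ Finset.range n, e j) ≠ ⊤ :=
        ENNReal.sum_ne_top.mpr (fun j hj => he_ne j (Finset.mem_range.mp hj))
      have hsum_toReal : (∑ j ∈ Finset.range n, e j).toReal = ∑ j ∈ Finset.range n, (e j).toReal :=
        ENNReal.toReal_sum (fun j hj => he_ne j (Finset.mem_range.mp hj))
      have ho0 : o 0 = a := by
        rw [ho_eq 0 (by omega)]
        exact p.src
      have hA : ∀ m, m ≤ n → d a (o m) ≤ ∑ j ∈ Finset.range m, e j := by
        intro m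
        induction m with
        | zero =>
          intro _
          rw [ho0]
          simp [h0 a]
        | succ m ih =>
          intro hm
          calc d a (o (m+1)) ≤ d a (o m) + e m := htri _ _ _
            _ ≤ (∑ j ∈ Finset.range m, e j) + e m := add_le_add (ih (by omega)) le_rfl
            _ = ∑ j ∈ Finset.range (m+1), e j := (Finset.sum_range_succ _ _).symm
      have hmemo : ∀ m, m ≤ n → o m ∈ S := by
        intro m hm
        have h1 : d a (o m) ≤ ∑ j ∈ Finset.range n, e j :=
          (hA m hm).trans (Finset.sum_le_sum_of_subset (Finset.range_subset_range.mpr hm))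
        refine ⟨ne_top_of_le_ne_top hsum_ne h1, ?_⟩
        calc (d a (o m)).toReal ≤ (∑ j ∈ Finset.range n, e j).toReal :=
              ENNReal.toReal_mono hsum_ne h1
          _ = p.length := by rw [hsum_toReal, hlen]
          _ ≤ ℓ := hp
      have hmem : ∀ (i : ℕ) (hi : i < n + 1), p.obj ⟨i, hi⟩ ∈ S := by
        intro i hi
        rw [← ho_eq i hi]
        exact hmemo i (by omega)
      have hdist : ∀ (i : Fin n), o i.1 ≠ o (i.1+1) := by
        intro i hEq
        apply p.nonid i
        apply hid
        rw [ho_eq i.1 (by omega), ho_eq (i.1+1) (by omega)] at hEq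
        rw [hcs i, hsc i]
        exact hEq
      have hstep : ∀ j, j < n → ¬(0 < (e j).toReal) → e j = 0 := by
        intro j hj hnpos
        have h1 : (e j).toReal = 0 := le_antisymm (not_lt.mp hnpos) ENNReal.toReal_nonneg
        rcases (ENNReal.toReal_eq_zero_iff _).mp h1 with h | h
        · exact h
        · exact absurd h (he_ne j hj)
      set k : ℕ → ℕ := fun i => ((Finset.range i).filter (fun j => 0 < (e j).toReal)).card with hk
      have hkmono : ∀ i i', i ≤ i' → k i ≤ k i' := fun i i' h =>
        Finset.card_le_card (Finset.filter_subset_filter _ (Finset.range_subset_range.mpr h))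
      have hkK : k n ≤ K := by
        have h1 : (k n : ℝ) * ε ≤ p.length := by
          rw [hlen]
          calc (k n : ℝ) * ε = k n • ε := (nsmul_eq_mul _ _).symm
            _ ≤ ∑ j ∈ (Finset.range n).filter (fun j => 0 < (e j).toReal), (e j).toReal := by
                apply Finset.card_nsmul_le_sum
                intro j hj
                rw [Finset.mem_filter, Finset.mem_range] at hj
                exact hεle (o j) (hmemo j (by omega)) (o (j+1)) (hmemo (j+1) (by omega)) hj.2
            _ ≤ ∑ j ∈ Finset.range n, (e j).toReal :=
                Finset.sum_le_sum_of_subset_of_nonneg (Finset.filter_subset _ _)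
                  (fun _ _ _ => ENNReal.toReal_nonneg)
        have h2 : (k n : ℝ) ≤ ℓ / ε := (le_div_iff₀ hε0).mpr (h1.trans hp)
        have h3 : (k n : ℝ) ≤ (K : ℝ) := h2.trans (Nat.le_ceil _)
        exact_mod_cast h3
      have hchain : ∀ (j i : ℕ), i < j → j ≤ n → k i = k j → rk (o i) < rk (o j) := by
        intro j
        induction j with
        | zero => intro i h; omega
        | succ j ih =>
          intro i hij hjn hkeq
          have hkj : k j = k (j+1) := by
            have h1 : k i ≤ k j := hkmono _ _ (by omega)
            have h2 : k j ≤ k (j+1) := hkmono _ _ (by omega)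
            omega
          have hzero : e j = 0 := by
            apply hstep j (by omega)
            intro hpos
            have : k j < k (j+1) := by
              apply Finset.card_lt_card
              constructor
              · exact Finset.filter_subset_filter _ (Finset.range_subset_range.mpr (by omega))
              · intro hcon
                have hjmem : j ∈ (Finset.range (j+1)).filter (fun t => 0 < (e t).toReal) := by
                  rw [Finset.mem_filter, Finset.mem_range]
                  exact ⟨by omega, hpos⟩
                have := hcon hjmem
                rw [Finset.mem_filter, Finset.mem_range] at this
                omega
            omega
          have hrj : rk (o j) < rk (o (j+1)) :=
            hrk_lt (o j) (hmemo j (by omega)) (o (j+1)) (hmemo (j+1) (by omega)) hzero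
              (hdist ⟨j, by omega⟩)
          rcases Nat.lt_or_ge i j with hlt | hge
          · have : rk (o i) < rk (o j) := ih i hlt (by omega) (by omega)
            omega
          · have : i = j := by omega
            rw [this]
            exact hrj
      have hinj : Function.Injective (fun i : Fin (n+1) =>
          ((⟨k i.1, by have := hkmono i.1 n (by omega); omega⟩ : Fin (K+1)),
           (⟨rk (o i.1), by have := hrk_le (o i.1); omega⟩ : Fin (M+1)))) := by
        intro i j hEq
        simp only [Prod.mk.injEq, Fin.mk.injEq] at hEq
        obtain ⟨h1, h2⟩ := hEq
        rcases Nat.lt_trichotomy i.1 j.1 with hlt | heq | hgt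
        · have := hchain j.1 i.1 hlt (by omega) h1
          omega
        · exact Fin.ext heq
        · have := hchain i.1 j.1 hgt (by omega) h1.symm
          omega
      have hcard := Fintype.card_le_of_injective _ hinj
      simp only [Fintype.card_fin, Fintype.card_prod] at hcard
      exact ⟨by omega, hmem⟩
    -- conclude finiteness by injecting into a finite type
    haveI := hS.fintype
    have hfin : Finite ↥{p : NDPath F a b | p.length ≤ ℓ} := by
      apply Finite.of_injective (β := Fin N × (Fin N → Option ↥S))
        (fun q : {p : NDPath F a b // p.length ≤ ℓ} => (⟨q.1.n, (key q.1 q.2).1⟩,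
          fun i => if h : i.1 < q.1.n + 1 then some ⟨q.1.obj ⟨i.1, h⟩, (key q.1 q.2).2 i.1 h⟩
            else none))
      intro q q' hEq
      simp only [Prod.mk.injEq, Fin.mk.injEq] at hEq
      obtain ⟨h1, h2⟩ := hEq
      apply Subtype.ext
      apply ndpath_ext hsub _ _ h1
      intro i hi hi'
      have hiN : i < N := by have := (key q.1 q.2).1; omega
      have h3 := congrFun h2 ⟨i, hiN⟩
      rw [dif_pos hi, dif_pos hi'] at h3
      have h4 := Option.some_injective _ h3
      exact congrArg Subtype.val h4
    exact Set.toFinite _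
end
end

section
/- A finite category C (viewed as enriched in filtered sets with all morphisms of degree 0) is tame if and only if C is skeletal and has no non-trivial endomorphisms. -/
noncomputable section
open Classical

variable {C : Type}

open CategoryTheory in
/-- A small category, viewed as a filtered-set enriched category with every morphism of
degree `0`. -/
def catToFCat (D : Type) [Category D] : FCat D where
  Hom a b := a ⟶ b
  deg _ := 0
  id a := 𝟙 a
  comp f g := f ≫ g
  id_comp f := Category.id_comp f
  comp_id f := Category.comp_id f
  assoc f g h := Category.assoc f g h
  deg_nonneg _ := le_refl 0
  deg_id _ := rfl
  deg_comp _ _ := by norm_num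


open CategoryTheory in
lemma length_zero' {D : Type} [Category D] {a b : D} (p : NDPath (catToFCat D) a b) :
    p.length = 0 := by
  unfold NDPath.length
  exact Finset.sum_eq_zero fun i _ => rfl

open CategoryTheory in
lemma heq_eqToHom' {D : Type} [Category D] {a b : D} (h : a = b) :
    HEq (eqToHom h) (𝟙 a) := by subst h; rfl

open CategoryTheory in
/-- A finite category (all morphisms of degree `0`) is tame iff it is skeletal and has
no non-trivial endomorphisms. -/
theorem stmt9 (D : Type) [Category D] [Fintype D] [∀ a b : D, Fintype (a ⟶ b)] :
    Tame (catToFCat D) ↔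
      (∀ a b : D, (a ≅ b) → a = b) ∧ (∀ (a : D) (f : a ⟶ a), f = 𝟙 a) := by
  constructor
  · rintro ⟨-, hT⟩
    obtain ⟨N, hN, hP⟩ := hT 0
    constructor
    · intro a b e
      by_contra hab
      set obj : Fin (N + 1) → D := fun i => if Even (i : ℕ) then a else b with hobj
      have hom : ∀ i : Fin N, obj i.castSucc ⟶ obj i.succ := by
        intro i
        by_cases h : Even ((i : ℕ))
        · have h2 : ¬ Even ((i : ℕ) + 1) := by simpa [Nat.even_add_one] using h
          simp only [hobj, Fin.coe_castSucc, Fin.val_succ, if_pos h, if_neg h2]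
          exact e.hom
        · have h2 : Even ((i : ℕ) + 1) := by simpa [Nat.even_add_one] using h
          simp only [hobj, Fin.coe_castSucc, Fin.val_succ, if_neg h, if_pos h2]
          exact e.inv
      let p : NDPath (catToFCat D) a (obj (Fin.last N)) :=
        { n := N, npos := hN, obj := obj, hom := hom,
          src := by simp [hobj]
          tgt := rfl
          nonid := by
            rintro i ⟨hEq, -⟩
            by_cases h : Even ((i : ℕ))
            · have h2 : ¬ Even ((i : ℕ) + 1) := by simpa [Nat.even_add_one] using h
              simp only [hobj, Fin.coe_castSucc, Fin.val_succ, if_pos h, if_neg h2] at hEq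
              exact hab hEq
            · have h2 : Even ((i : ℕ) + 1) := by simpa [Nat.even_add_one] using h
              simp only [hobj, Fin.coe_castSucc, Fin.val_succ, if_neg h, if_pos h2] at hEq
              exact hab hEq.symm }
      have := hP a _ p rfl
      rw [length_zero'] at this
      exact lt_irrefl _ this
    · intro a f
      by_contra hf
      let p : NDPath (catToFCat D) a a :=
        { n := N, npos := hN, obj := fun _ => a, hom := fun _ => f, src := rfl, tgt := rfl,
          nonid := fun i h => hf (eq_of_heq h.2) }
      have := hP a a p rfl
      rw [length_zero'] at this
      exact lt_irrefl _ this
  · rintro ⟨hskel, hendo⟩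
    have key : ∀ {a b : D}, (a ⟶ b) → (b ⟶ a) → a = b := by
      intro a b f g
      exact hskel a b ⟨f, g, hendo a (f ≫ g), hendo b (g ≫ f)⟩
    have inj : ∀ {a b : D} (p : NDPath (catToFCat D) a b), Function.Injective p.obj := by
      intro a b p
      have mor : ∀ (i j : ℕ) (hij : i ≤ j) (hj : j ≤ p.n),
          Nonempty (p.obj ⟨i, by omega⟩ ⟶ p.obj ⟨j, by omega⟩) := by
        intro i j hij hj
        induction j, hij using Nat.le_induction with
        | base => exact ⟨𝟙 _⟩
        | succ m hm ih =>
          obtain ⟨g⟩ := ih (by omega)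
          exact ⟨g ≫ (show p.obj ⟨m, by omega⟩ ⟶ p.obj ⟨m + 1, by omega⟩ from
            p.hom ⟨m, by omega⟩)⟩
      intro i j hij
      by_contra hne
      wlog h : (i : ℕ) < (j : ℕ) generalizing i j
      · have hv : (i : ℕ) ≠ (j : ℕ) := fun hv => hne (Fin.ext hv)
        exact this hij.symm (Ne.symm hne) (by omega)
      have hi : (i : ℕ) < p.n := by omega
      let f : p.obj i ⟶ p.obj ⟨(i : ℕ) + 1, by omega⟩ := p.hom ⟨(i : ℕ), hi⟩
      obtain ⟨g0⟩ := mor ((i : ℕ) + 1) (j : ℕ) (by omega) (by omega)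
      have g : p.obj ⟨(i : ℕ) + 1, by omega⟩ ⟶ p.obj i := g0 ≫ eqToHom hij.symm
      have eAB : p.obj i = p.obj ⟨(i : ℕ) + 1, by omega⟩ := key f g
      have hf : f = eqToHom eAB := by
        have h1 := hendo _ (f ≫ eqToHom eAB.symm)
        calc f = (f ≫ eqToHom eAB.symm) ≫ eqToHom eAB := by simp
          _ = 𝟙 _ ≫ eqToHom eAB := by rw [h1]
          _ = eqToHom eAB := by simp
      have hh : HEq f ((catToFCat D).id (p.obj i)) := by
        rw [hf]; exact heq_eqToHom' eAB
      exact p.nonid ⟨(i : ℕ), hi⟩ ⟨eAB, hh⟩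
    constructor
    · intro a ℓ
      haveI : Finite (Σ b : D, (catToFCat D).Hom a b) :=
        inferInstanceAs (Finite (Σ b : D, a ⟶ b))
      haveI : Finite (Σ b : D, (catToFCat D).Hom b a) :=
        inferInstanceAs (Finite (Σ b : D, b ⟶ a))
      exact ⟨Set.toFinite _, Set.toFinite _⟩
    · intro ℓ
      refine ⟨Fintype.card D + 1, Nat.succ_pos _, ?_⟩
      intro a b p hp
      exfalso
      have := Fintype.card_le_of_injective p.obj (inj p)
      simp [hp] at this
end
end

section
/- Let P be a finite poset, metrized as a generalized metric space with all non-identity relations given degree 1. Then the magnitude of P equals ∑_{k=0}^{dim Δ(P)} (-1)^k · c_k · q^k, where c_k is the number of chains a_0 < a_1 < ⋯ < a_k in P and Δ(P) is the order complex. In particular, evaluating at q = 1 yields the Euler characteristic of the order complex Δ(P). -/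
noncomputable section
open Classical

/-- The zeta matrix of a finite poset metrized with all non-identity relations of
degree `1`: `ζ(a,b) = q^0` if `a = b`, `q^1` if `a < b`, and `0` otherwise. -/
def posetZeta (P : Type) [PartialOrder P] : P → P → ℝ → ℚ :=
  fun a b x =>
    if a = b then (if x = 0 then 1 else 0)
    else if a < b then (if x = 1 then 1 else 0) else 0

/-- The number of chains `a₀ < a₁ < ⋯ < a_k` in `P`. -/
def chainCount (P : Type) [PartialOrder P] (k : ℕ) : ℕ :=
  Nat.card {c : Fin (k + 1) → P // StrictMono c}

namespace Stmt10Aux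

open Finset

/-- Number of chains `a = a₀ < ⋯ < a_k = b`. -/
def cc (P : Type) [PartialOrder P] (a b : P) (k : ℕ) : ℕ :=
  Nat.card {c : Fin (k + 1) → P // StrictMono c ∧ c 0 = a ∧ c (Fin.last k) = b}

variable {P : Type} [PartialOrder P] [Fintype P]

lemma cc_card (a b : P) (k : ℕ) :
    cc P a b k =
      (univ.filter (fun c : Fin (k + 1) → P =>
        StrictMono c ∧ c 0 = a ∧ c (Fin.last k) = b)).card := by
  rw [cc, Nat.card_eq_fintype_card, Fintype.card_subtype]

omit [Fintype P] in
lemma cc_zero (a b : P) : cc P a b 0 = if a = b then 1 else 0 := by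
  by_cases h : a = b
  · subst h
    rw [cc, if_pos rfl]
    have : Unique {c : Fin 1 → P // StrictMono c ∧ c 0 = a ∧ c (Fin.last 0) = a} := by
      refine ⟨⟨⟨fun _ => a, Subsingleton.strictMono _, rfl, rfl⟩⟩, ?_⟩
      rintro ⟨c, hm, h0, hl⟩
      ext i
      rw [Subsingleton.elim i 0]
      exact h0
    exact Nat.card_unique
  · rw [cc, if_neg h]
    have : IsEmpty {c : Fin 1 → P // StrictMono c ∧ c 0 = a ∧ c (Fin.last 0) = b} := by
      refine ⟨?_⟩
      rintro ⟨c, hm, h0, hl⟩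
      exact h (h0 ▸ hl ▸ rfl)
    exact Nat.card_of_isEmpty

lemma cc_eq_zero {k : ℕ} (h : Fintype.card P ≤ k) (a b : P) : cc P a b k = 0 := by
  have : IsEmpty {c : Fin (k + 1) → P // StrictMono c ∧ c 0 = a ∧ c (Fin.last k) = b} := by
    refine ⟨?_⟩
    rintro ⟨c, hm, -, -⟩
    have := Fintype.card_le_of_injective c hm.injective
    simp [Fintype.card_fin] at this
    omega
  exact Nat.card_of_isEmpty

lemma chainCount_eq_zero {k : ℕ} (h : Fintype.card P ≤ k) : chainCount P k = 0 := by
  have : IsEmpty {c : Fin (k + 1) → P // StrictMono c} := by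
    refine ⟨?_⟩
    rintro ⟨c, hm⟩
    have := Fintype.card_le_of_injective c hm.injective
    simp [Fintype.card_fin] at this
    omega
  exact Nat.card_of_isEmpty

lemma chainCount_eq (k : ℕ) :
    chainCount P k = ∑ a : P, ∑ b : P, cc P a b k := by
  rw [chainCount, Nat.card_eq_fintype_card, Fintype.card_subtype]
  rw [Finset.card_eq_sum_card_fiberwise
    (f := fun c : Fin (k + 1) → P => (c 0, c (Fin.last k))) (t := univ)
    (fun c _ => mem_univ _)]
  rw [Fintype.sum_prod_type]
  refine Finset.sum_congr rfl fun a _ => Finset.sum_congr rfl fun b _ => ?_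
  rw [cc_card, Finset.filter_filter]
  congr 1
  apply Finset.filter_congr
  intro c _
  simp [Prod.ext_iff, and_assoc]

lemma cc_succ (a b : P) (k : ℕ) :
    cc P a b (k + 1) = ∑ u : P, if a < u then cc P u b k else 0 := by
  rw [cc_card]
  rw [Finset.card_eq_sum_card_fiberwise
    (f := fun c : Fin (k + 2) → P => c 1) (t := univ) (fun c _ => mem_univ _)]
  refine Finset.sum_congr rfl fun u _ => ?_
  by_cases hu : a < u
  · rw [if_pos hu, cc_card]
    refine Finset.card_bij' (fun c _ => Fin.tail c) (fun d _ => Fin.cons a d) ?_ ?_ ?_ ?_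
    · intro c hc
      simp only [Finset.mem_filter, Finset.mem_univ, true_and] at hc ⊢
      obtain ⟨⟨hm, h0, hl⟩, h1⟩ := hc
      refine ⟨hm.comp Fin.strictMono_succ, ?_, ?_⟩
      · show c (Fin.succ 0) = u
        rw [Fin.succ_zero_eq_one]; exact h1
      · show c (Fin.succ (Fin.last k)) = b
        rw [Fin.succ_last]; exact hl
    · intro d hd
      simp only [Finset.mem_filter, Finset.mem_univ, true_and] at hd ⊢
      obtain ⟨hm, h0, hl⟩ := hd
      refine ⟨⟨?_, Fin.cons_zero _ _, ?_⟩, ?_⟩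
      · exact hm.vecCons (h0 ▸ hu)
      · rw [← Fin.succ_last, Fin.cons_succ]; exact hl
      · rw [show (1 : Fin (k + 2)) = Fin.succ 0 from (Fin.succ_zero_eq_one).symm,
          Fin.cons_succ]; exact h0
    · intro c hc
      simp only [Finset.mem_filter, Finset.mem_univ, true_and] at hc
      show Fin.cons a (Fin.tail c) = c
      conv_rhs => rw [← Fin.cons_self_tail c]
      rw [hc.1.2.1]
    · intro d _
      exact Fin.tail_cons (α := fun _ : Fin (k + 2) => P) a d
  · rw [if_neg hu]
    convert Finset.card_empty
    rw [Finset.eq_empty_iff_forall_notMem]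
    intro c hc
    simp only [Finset.mem_filter, Finset.mem_univ, true_and] at hc
    obtain ⟨⟨hm, h0, -⟩, h1⟩ := hc
    exact hu (h0 ▸ h1 ▸ hm (show (0 : Fin (k + 2)) < 1 from Fin.one_pos'))

/-- The candidate Möbius matrix. -/
def Mag (P : Type) [PartialOrder P] [Fintype P] (a b : P) (x : ℝ) : ℚ :=
  ∑ k ∈ Finset.range (Fintype.card P),
    if x = (k : ℝ) then (-1 : ℚ) ^ k * (cc P a b k : ℚ) else 0

lemma conv_posetZeta (a u : P) (g : ℝ → ℚ) (x : ℝ) :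
    conv (posetZeta P a u) g x = if a = u then g x else if a < u then g (x - 1) else 0 := by
  by_cases h1 : a = u
  · simp only [conv, posetZeta, if_pos h1]
    rw [finsum_eq_single _ (0 : ℝ) (fun y hy => by simp [hy])]
    simp
  · by_cases h2 : a < u
    · simp only [conv, posetZeta, if_neg h1, if_pos h2]
      rw [finsum_eq_single _ (1 : ℝ) (fun y hy => by simp [hy])]
      simp
    · simp only [conv, posetZeta, if_neg h1, if_neg h2]
      simp

lemma telescope (m : ℕ) (F G : ℕ → ℚ) (h : ∀ k, F (k + 1) + G k = 0) (hGm : G m = 0) :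
    (∑ k ∈ Finset.range (m + 1), F k) + (∑ k ∈ Finset.range (m + 1), G k) = F 0 := by
  rw [Finset.sum_range_succ', Finset.sum_range_succ, hGm, add_zero]
  have h0 : ∑ k ∈ Finset.range m, F (k + 1) + ∑ k ∈ Finset.range m, G k = 0 := by
    rw [← Finset.sum_add_distrib]; exact Finset.sum_eq_zero fun k _ => h k
  linarith

lemma Mag_rec (a b : P) (x : ℝ) :
    Mag P a b x + (∑ u : P, if a < u then Mag P u b (x - 1) else 0)
      = if a = b ∧ x = 0 then 1 else 0 := by
  obtain ⟨m, hm⟩ : ∃ m, Fintype.card P = m + 1 :=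
    ⟨Fintype.card P - 1, by have := Fintype.card_pos_iff.mpr ⟨a⟩; omega⟩
  have hsum : (∑ u : P, if a < u then Mag P u b (x - 1) else 0)
      = ∑ k ∈ Finset.range (Fintype.card P),
          (if x - 1 = (k : ℝ) then (-1 : ℚ) ^ k * (cc P a b (k + 1) : ℚ) else 0) := by
    have e : ∀ u : P, (if a < u then Mag P u b (x - 1) else 0)
        = ∑ k ∈ Finset.range (Fintype.card P),
            (if a < u then (if x - 1 = (k : ℝ) then (-1 : ℚ) ^ k * (cc P u b k : ℚ) else 0)
              else 0) := by
      intro u; by_cases h : a < u <;> simp [Mag, h]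
    rw [Finset.sum_congr rfl fun u _ => e u, Finset.sum_comm]
    refine Finset.sum_congr rfl fun k _ => ?_
    by_cases hx : x - 1 = (k : ℝ)
    · simp only [if_pos hx]
      rw [cc_succ]
      push_cast
      rw [Finset.mul_sum]
      refine Finset.sum_congr rfl fun u _ => ?_
      by_cases h : a < u <;> simp [h]
    · simp [hx]
  rw [hsum]
  simp only [Mag]
  rw [hm]
  rw [telescope m
    (fun k => if x = (k : ℝ) then (-1 : ℚ) ^ k * (cc P a b k : ℚ) else 0)
    (fun k => if x - 1 = (k : ℝ) then (-1 : ℚ) ^ k * (cc P a b (k + 1) : ℚ) else 0)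
    ?_ ?_]
  · by_cases hab : a = b <;> by_cases hx : x = (0 : ℝ) <;>
      simp [cc_zero, hab, hx]
  · intro k
    have hcond : (x = ((k + 1 : ℕ) : ℝ)) ↔ (x - 1 = (k : ℝ)) := by
      push_cast; constructor <;> intro h <;> linarith
    by_cases h : x - 1 = (k : ℝ)
    · rw [if_pos (hcond.mpr h), if_pos h, pow_succ]; push_cast; ring
    · rw [if_neg (fun hh => h (hcond.mp hh)), if_neg h, add_zero]
  · have : cc P a b (m + 1) = 0 := cc_eq_zero hm.le a b
    simp [this]

end Stmt10Aux

open Stmt10Aux Finset in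
/-- Let `P` be a finite poset, metrized with all non-identity relations of degree `1`.
Then the magnitude of `P` (i.e. `∑_{a,b} ζ⁻¹(a,b)` for any two-sided inverse `ζ⁻¹` of the
zeta matrix over `A`) equals `∑_k (-1)^k c_k q^k`, where `c_k` is the number of chains
`a₀ < ⋯ < a_k` in `P`; in particular its value at `q = 1` is the Euler characteristic
`χ(Δ(P)) = ∑_k (-1)^k c_k` of the order complex. -/
theorem stmt10 (P : Type) [PartialOrder P] [Fintype P]
    (ζinv : P → P → ℝ → ℚ)
    (hleft : ∀ (a b : P) (x : ℝ),
      (∑ u : P, conv (posetZeta P a u) (ζinv u b) x) = if a = b ∧ x = 0 then 1 else 0)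
    (hright : ∀ (a b : P) (x : ℝ),
      (∑ u : P, conv (ζinv a u) (posetZeta P u b) x) = if a = b ∧ x = 0 then 1 else 0) :
    ((fun x : ℝ => ∑ a : P, ∑ b : P, ζinv a b x) =
      fun x : ℝ => ∑ᶠ k : ℕ,
        (if x = (k : ℝ) then ((-1 : ℚ)) ^ k * (chainCount P k : ℚ) else 0)) ∧
    (∑ᶠ x : ℝ, ∑ a : P, ∑ b : P, ζinv a b x) =
      ∑ᶠ k : ℕ, ((-1 : ℚ)) ^ k * (chainCount P k : ℚ) := by
  -- the recurrence satisfied by `ζinv`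
  have hζ : ∀ (a b : P) (x : ℝ),
      ζinv a b x + (∑ u : P, if a < u then ζinv u b (x - 1) else 0)
        = if a = b ∧ x = 0 then 1 else 0 := by
    intro a b x
    have h := hleft a b x
    have e : ∀ u : P, conv (posetZeta P a u) (ζinv u b) x
        = (if a = u then ζinv u b x else 0) + (if a < u then ζinv u b (x - 1) else 0) := by
      intro u
      rw [conv_posetZeta]
      by_cases h1 : a = u
      · subst h1; simp [lt_irrefl]
      · simp [h1]
    rw [Finset.sum_congr rfl fun u _ => e u, Finset.sum_add_distrib,
      Finset.sum_ite_eq] at h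
    simpa using h
  -- uniqueness of the inverse : `ζinv = Mag`
  have wf : WellFounded ((· > ·) : P → P → Prop) := IsWellFounded.wf
  have key : ∀ (a b : P) (x : ℝ), ζinv a b x = Mag P a b x := by
    refine fun a => wf.induction (C := fun a => ∀ (b : P) (x : ℝ), ζinv a b x = Mag P a b x)
      a ?_
    intro a IH b x
    have e1 := hζ a b x
    have e2 := Mag_rec a b x
    have e3 : (∑ u : P, if a < u then ζinv u b (x - 1) else 0)
        = ∑ u : P, if a < u then Mag P u b (x - 1) else 0 := by
      refine Finset.sum_congr rfl fun u _ => ?_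
      by_cases h : a < u
      · rw [if_pos h, if_pos h, IH u h]
      · rw [if_neg h, if_neg h]
    rw [e3] at e1
    linarith
  -- the total sum as a finite sum
  have hsum2 : ∀ x : ℝ, (∑ a : P, ∑ b : P, ζinv a b x)
      = ∑ k ∈ Finset.range (Fintype.card P),
          (if x = (k : ℝ) then (-1 : ℚ) ^ k * (chainCount P k : ℚ) else 0) := by
    intro x
    simp only [key, Mag]
    have step1 : ∀ a : P, (∑ b : P, ∑ k ∈ Finset.range (Fintype.card P),
        if x = (k : ℝ) then (-1 : ℚ) ^ k * (cc P a b k : ℚ) else 0)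
        = ∑ k ∈ Finset.range (Fintype.card P), ∑ b : P,
          (if x = (k : ℝ) then (-1 : ℚ) ^ k * (cc P a b k : ℚ) else 0) :=
      fun a => Finset.sum_comm
    rw [Finset.sum_congr rfl fun a _ => step1 a, Finset.sum_comm]
    refine Finset.sum_congr rfl fun k _ => ?_
    by_cases hx : x = (k : ℝ)
    · simp only [if_pos hx, chainCount_eq (P := P) k]
      push_cast
      simp [Finset.mul_sum]
    · simp [hx]
  constructor
  · funext x
    rw [hsum2 x]
    refine (finsum_eq_sum_of_support_subset _ ?_).symm
    intro k hk
    simp only [Function.mem_support] at hk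
    simp only [Finset.coe_range, Set.mem_Iio]
    by_contra hmem
    apply hk
    have hcard : Fintype.card P ≤ k := le_of_not_gt hmem
    by_cases hx : x = (k : ℝ)
    · simp [hx, chainCount_eq_zero hcard]
    · simp [hx]
  · have h1 : (∑ᶠ x : ℝ, ∑ a : P, ∑ b : P, ζinv a b x)
        = ∑ j ∈ Finset.range (Fintype.card P), (-1 : ℚ) ^ j * (chainCount P j : ℚ) := by
      have hss : Function.support (fun x : ℝ => ∑ a : P, ∑ b : P, ζinv a b x)
          ⊆ ((Finset.range (Fintype.card P)).image (Nat.cast : ℕ → ℝ) : Finset ℝ) := by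
        intro x hx
        simp only [Function.mem_support] at hx
        by_contra hmem
        apply hx
        rw [hsum2 x]
        refine Finset.sum_eq_zero fun k hk => ?_
        have : x ≠ (k : ℝ) := by
          intro h
          exact hmem (by
            simp only [Finset.coe_image, Set.mem_image, Finset.mem_coe]
            exact ⟨k, hk, h.symm⟩)
        simp [this]
      rw [finsum_eq_sum_of_support_subset _ hss]
      rw [Finset.sum_image (fun i _ j _ h => Nat.cast_injective h)]
      refine Finset.sum_congr rfl fun j hj => ?_
      rw [hsum2]
      rw [Finset.sum_eq_single j]
      · simp
      · intro k _ hkj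
        rw [if_neg (fun h => hkj (Nat.cast_inj.mp h).symm)]
      · intro hj'
        exact absurd hj hj'
    rw [h1]
    refine (finsum_eq_sum_of_support_subset _ ?_).symm
    intro k hk
    simp only [Function.mem_support] at hk
    simp only [Finset.coe_range, Set.mem_Iio]
    by_contra hmem
    exact hk (by simp [chainCount_eq_zero (le_of_not_gt hmem)])
end
end

section
/- Let Γ be a group with a finite generating set S, viewed as a one-object filtered-set enriched category where the morphism set is Γ and deg g is the word length of g with respect to S. Then this category is a finite tame category and its magnitude equals (∑_{g∈Γ} q^{wl(g)})^{-1}, the inverse of the growth series of (Γ,S), in the Novikov ring ℚ[[q^ℝ]]. -/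
noncomputable section
open Classical

/-- Word length of `g` with respect to the generating set `S`. -/
def wordLength {G : Type} [Group G] (S : Finset G) (g : G) : ℕ :=
  sInf {n : ℕ | ∃ f : Fin n → G,
    (∀ i, f i ∈ (S : Set G) ∪ ((S : Set G)⁻¹)) ∧ (List.ofFn f).prod = g}

/-- The growth series `∑_{g ∈ Γ} q^{wl(g)}` of `(Γ, S)` as an element of `A`. -/
def growthSeries (G : Type) [Group G] (S : Finset G) : ℝ → ℚ :=
  fun x => (Nat.card {g : G // ((wordLength S g : ℝ) = x)} : ℚ)

namespace Stmt11Aux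

variable {G : Type} [Group G] (S : Finset G)

/-- The symmetric generating set. -/
def T (S : Finset G) : Set G := (S : Set G) ∪ ((S : Set G)⁻¹)

lemma T_finite : (T S).Finite :=
  (S.finite_toSet).union (S.finite_toSet.inv)

lemma T_inv {x : G} (hx : x ∈ T S) : x⁻¹ ∈ T S := by
  rcases hx with h | h
  · exact Or.inr (by simpa using h)
  · exact Or.inl (by simpa using h)

/-- The word-length defining set, list version. -/
def W (S : Finset G) (g : G) : Set ℕ :=
  {n : ℕ | ∃ l : List G, l.length = n ∧ (∀ x ∈ l, x ∈ T S) ∧ l.prod = g}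

lemma wordLength_eq (g : G) : wordLength S g = sInf (W S g) := by
  unfold wordLength W
  congr 1
  ext n
  constructor
  · rintro ⟨f, hf, hprod⟩
    exact ⟨List.ofFn f, by simp, by
      intro x hx
      rcases List.mem_ofFn.mp hx with ⟨i, rfl⟩
      exact hf i, hprod⟩
  · rintro ⟨l, rfl, hl, rfl⟩
    exact ⟨l.get, fun i => hl _ (l.get_mem i), by rw [List.ofFn_get]⟩

lemma W_nonempty (hS : Subgroup.closure (S : Set G) = ⊤) (g : G) : (W S g).Nonempty := by
  have hg : g ∈ Subgroup.closure (S : Set G) := hS ▸ Subgroup.mem_top g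
  induction hg using Subgroup.closure_induction with
  | mem x hx => exact ⟨1, [x], rfl, by simp only [List.mem_singleton, forall_eq]; exact Or.inl hx, by simp⟩
  | one => exact ⟨0, [], rfl, by simp, by simp⟩
  | mul x y hx hy ihx ihy =>
      obtain ⟨n, lx, hlen, hmem, hprod⟩ := ihx
      obtain ⟨m, ly, hlen', hmem', hprod'⟩ := ihy
      exact ⟨n + m, lx ++ ly, by simp [hlen, hlen'], by
        intro z hz
        rcases List.mem_append.mp hz with h | h
        · exact hmem z h
        · exact hmem' z h, by simp [hprod, hprod']⟩
  | inv x hx ihx =>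
      obtain ⟨n, lx, hlen, hmem, hprod⟩ := ihx
      refine ⟨n, (lx.map fun z => z⁻¹).reverse, by simp [hlen], ?_, ?_⟩
      · intro z hz
        simp only [List.mem_reverse, List.mem_map] at hz
        obtain ⟨w, hw, rfl⟩ := hz
        exact T_inv S (hmem w hw)
      · rw [← List.prod_inv_reverse, hprod]

lemma wordLength_mem (hS : Subgroup.closure (S : Set G) = ⊤) (g : G) :
    wordLength S g ∈ W S g := by
  rw [wordLength_eq]
  exact Nat.sInf_mem (W_nonempty S hS g)

lemma wordLength_le {g : G} {n : ℕ} (h : n ∈ W S g) : wordLength S g ≤ n := by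
  rw [wordLength_eq]; exact Nat.sInf_le h

lemma wordLength_one : wordLength S (1 : G) = 0 :=
  Nat.le_zero.mp (wordLength_le S ⟨[], rfl, by simp, by simp⟩)

lemma eq_one_of_wordLength_eq_zero (hS : Subgroup.closure (S : Set G) = ⊤) {g : G}
    (h : wordLength S g = 0) : g = 1 := by
  have := wordLength_mem S hS g
  rw [h] at this
  obtain ⟨l, hlen, -, hprod⟩ := this
  rw [List.length_eq_zero_iff] at hlen
  simp [hlen] at hprod
  exact hprod.symm

lemma one_le_wordLength (hS : Subgroup.closure (S : Set G) = ⊤) {g : G} (h : g ≠ 1) :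
    1 ≤ wordLength S g := by
  by_contra hlt
  exact h (eq_one_of_wordLength_eq_zero S hS (by omega))

lemma collectable (hS : Subgroup.closure (S : Set G) = ⊤) (n : ℕ) :
    {g : G | wordLength S g ≤ n}.Finite := by
  induction n with
  | zero =>
      refine Set.Finite.subset (Set.finite_singleton (1 : G)) ?_
      intro g hg
      exact eq_one_of_wordLength_eq_zero S hS (Nat.le_zero.mp hg)
  | succ n ih =>
      have : {g : G | wordLength S g ≤ n + 1} ⊆
          insert (1 : G) (⋃ t ∈ T S, (fun h => t * h) '' {g : G | wordLength S g ≤ n}) := by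
        intro g hg
        have hg' : wordLength S g ≤ n + 1 := hg
        obtain ⟨l, hlen, hmem, hprod⟩ := wordLength_mem S hS g
        match l with
        | [] => simp at hprod; exact Or.inl hprod.symm
        | t :: l' =>
            right
            refine Set.mem_biUnion (hmem t (by simp)) ⟨l'.prod, ?_, by
              simpa using hprod⟩
            have h1 : wordLength S l'.prod ≤ l'.length :=
              wordLength_le S ⟨l', rfl, fun x hx => hmem x (by simp [hx]), rfl⟩
            have h2 : l'.length ≤ n := by
              simp only [List.length_cons] at hlen
              omega
            exact le_trans h1 h2
      refine Set.Finite.subset (Set.Finite.insert _ ?_) this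
      exact Set.Finite.biUnion (T_finite S) (fun t _ => ih.image _)

/-! ### The Novikov embedding of `ℚ⟦X⟧` -/

/-- Embed a sequence into functions `ℝ → ℚ` supported on `ℕ`. -/
def Fq (b : ℕ → ℚ) : ℝ → ℚ := fun x => if h : ∃ n : ℕ, (n : ℝ) = x then b h.choose else 0

lemma Fq_cast (b : ℕ → ℚ) (n : ℕ) : Fq b (n : ℝ) = b n := by
  have h : ∃ m : ℕ, (m : ℝ) = (n : ℝ) := ⟨n, rfl⟩
  rw [Fq, dif_pos h]
  congr 1
  exact_mod_cast h.choose_spec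

lemma Fq_not (b : ℕ → ℚ) {x : ℝ} (hx : ¬ ∃ n : ℕ, (n : ℝ) = x) : Fq b x = 0 :=
  dif_neg hx

lemma isNov_Fq (b : ℕ → ℚ) : IsNov (Fq b) := by
  constructor
  · intro L
    refine Set.Finite.subset ((Set.finite_Iic ⌈L⌉₊).image (Nat.cast : ℕ → ℝ)) ?_
    rintro x ⟨hxL, hx⟩
    by_cases h : ∃ n : ℕ, (n : ℝ) = x
    · obtain ⟨n, rfl⟩ := h
      refine ⟨n, ?_, rfl⟩
      have : (n : ℝ) ≤ (⌈L⌉₊ : ℝ) := le_trans hxL (Nat.le_ceil L)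
      exact_mod_cast this
    · exact absurd (Fq_not b h) hx
  · intro x hx
    refine Fq_not b ?_
    rintro ⟨n, rfl⟩
    exact absurd hx (not_lt.mpr (Nat.cast_nonneg n))

lemma conv_Fq (b c : ℕ → ℚ) :
    conv (Fq b) (Fq c) = Fq (fun n => ∑ k ∈ Finset.range (n + 1), b k * c (n - k)) := by
  funext ℓ
  by_cases hℓ : ∃ n : ℕ, (n : ℝ) = ℓ
  · obtain ⟨n, rfl⟩ := hℓ
    rw [Fq_cast]
    show ∑ᶠ x : ℝ, Fq b x * Fq c ((n : ℝ) - x) = _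
    have hsub : Function.support (fun x : ℝ => Fq b x * Fq c ((n : ℝ) - x)) ⊆
        ((Finset.range (n + 1)).image (Nat.cast : ℕ → ℝ) : Finset ℝ) := by
      intro x hx
      have hb : Fq b x ≠ 0 := fun h => hx (by simp [h])
      have hc : Fq c ((n : ℝ) - x) ≠ 0 := fun h => hx (by simp [h])
      have h1 : ∃ k : ℕ, (k : ℝ) = x := by
        by_contra h; exact hb (Fq_not b h)
      obtain ⟨k, rfl⟩ := h1
      have h2 : ∃ m : ℕ, (m : ℝ) = (n : ℝ) - (k : ℝ) := by
        by_contra h; exact hc (Fq_not c h)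
      obtain ⟨m, hm⟩ := h2
      have hkn : k ≤ n := by
        have : (k : ℝ) ≤ (n : ℝ) := by nlinarith [Nat.cast_nonneg (α := ℝ) m]
        exact_mod_cast this
      simp only [Finset.coe_image, Set.mem_image, Finset.mem_coe, Finset.mem_range]
      exact ⟨k, by omega, rfl⟩
    rw [finsum_eq_sum_of_support_subset _ hsub,
      Finset.sum_image (by intro a _ b _ h; exact_mod_cast h)]
    refine Finset.sum_congr rfl ?_
    intro k hk
    have hkn : k ≤ n := by simpa [Nat.lt_succ_iff] using hk
    have : (n : ℝ) - (k : ℝ) = ((n - k : ℕ) : ℝ) := by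
      rw [Nat.cast_sub hkn]
    rw [Fq_cast, this, Fq_cast]
  · rw [Fq_not _ hℓ]
    show ∑ᶠ x : ℝ, Fq b x * Fq c (ℓ - x) = 0
    have : ∀ x : ℝ, Fq b x * Fq c (ℓ - x) = 0 := by
      intro x
      by_cases h1 : ∃ k : ℕ, (k : ℝ) = x
      · obtain ⟨k, rfl⟩ := h1
        by_cases h2 : ∃ m : ℕ, (m : ℝ) = ℓ - (k : ℝ)
        · obtain ⟨m, hm⟩ := h2
          exact absurd ⟨k + m, by push_cast; linarith⟩ hℓ
        · rw [Fq_not c h2, mul_zero]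
      · rw [Fq_not b h1, zero_mul]
    simp only [this]
    exact finsum_zero

lemma delta_Fq : delta = Fq (fun n => if n = 0 then 1 else 0) := by
  funext x
  by_cases h : ∃ n : ℕ, (n : ℝ) = x
  · obtain ⟨n, rfl⟩ := h
    rw [Fq_cast]
    simp [delta, Nat.cast_eq_zero]
  · rw [Fq_not _ h, delta]
    rw [if_neg]
    rintro rfl
    exact h ⟨0, by simp⟩

lemma growthSeries_eq :
    growthSeries G S = Fq (fun n => (Nat.card {g : G // wordLength S g = n} : ℚ)) := by
  funext x
  by_cases h : ∃ n : ℕ, (n : ℝ) = x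
  · obtain ⟨n, rfl⟩ := h
    rw [Fq_cast]
    show (Nat.card {g : G // ((wordLength S g : ℝ) = (n : ℝ))} : ℚ) = _
    have e : {g : G // ((wordLength S g : ℝ) = (n : ℝ))} ≃ {g : G // wordLength S g = n} :=
      Equiv.subtypeEquivRight fun g => Nat.cast_inj
    rw [Nat.card_congr e]
  · rw [Fq_not _ h, growthSeries]
    have : IsEmpty {g : G // ((wordLength S g : ℝ) = x)} :=
      ⟨fun ⟨g, hg⟩ => h ⟨wordLength S g, hg⟩⟩
    simp [Nat.card_of_isEmpty]

lemma card_zero (hS : Subgroup.closure (S : Set G) = ⊤) :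
    Nat.card {g : G // wordLength S g = 0} = 1 := by
  have : ∀ g : G, wordLength S g = 0 ↔ g = 1 := fun g =>
    ⟨eq_one_of_wordLength_eq_zero S hS, fun h => h ▸ wordLength_one S⟩
  haveI : Unique {g : G // wordLength S g = 0} :=
    ⟨⟨⟨1, wordLength_one S⟩⟩, fun x => Subtype.ext ((this x.1).mp x.2)⟩
  exact Nat.card_unique

lemma conv_inv (c : ℕ → ℚ) (hc0 : c 0 ≠ 0) :
    ∃ m : ℝ → ℚ, IsNov m ∧ conv (Fq c) m = delta ∧ conv m (Fq c) = delta := by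
  set P : PowerSeries ℚ := PowerSeries.mk c with hP
  have hconst : PowerSeries.constantCoeff P ≠ 0 := by
    rwa [hP, ← PowerSeries.coeff_zero_eq_constantCoeff_apply, PowerSeries.coeff_mk]
  refine ⟨Fq (fun n => PowerSeries.coeff n P⁻¹), isNov_Fq _, ?_, ?_⟩
  · rw [conv_Fq, delta_Fq]
    refine congrArg Fq (funext fun n => ?_)
    have : ∑ k ∈ Finset.range (n + 1), c k * PowerSeries.coeff (n - k) P⁻¹
        = PowerSeries.coeff n (P * P⁻¹) := by
      rw [PowerSeries.coeff_mul, Finset.Nat.sum_antidiagonal_eq_sum_range_succ_mk]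
      exact Finset.sum_congr rfl fun k _ => by rw [hP, PowerSeries.coeff_mk]
    rw [this, PowerSeries.mul_inv_cancel P hconst, PowerSeries.coeff_one]
  · rw [conv_Fq, delta_Fq]
    refine congrArg Fq (funext fun n => ?_)
    have : ∑ k ∈ Finset.range (n + 1), PowerSeries.coeff k P⁻¹ * c (n - k)
        = PowerSeries.coeff n (P⁻¹ * P) := by
      rw [PowerSeries.coeff_mul, Finset.Nat.sum_antidiagonal_eq_sum_range_succ_mk]
      exact Finset.sum_congr rfl fun k _ => by rw [hP, PowerSeries.coeff_mk]
    rw [this, PowerSeries.inv_mul_cancel P hconst, PowerSeries.coeff_one]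

end Stmt11Aux

open Stmt11Aux in
/-- Let `Γ` be a group with a finite generating set `S`, viewed as a one-object
filtered-set enriched category with morphism set `Γ` and `deg g = wl(g)`.  Then this
category is a finite tame category (its hom filtered set is collectable and the tameness
condition on composable sequences of non-identity morphisms holds), and its magnitude is
the inverse in `A = ℚ[[q^ℝ]]` of the growth series `∑_{g} q^{wl(g)}`. -/
theorem stmt11 (G : Type) [Group G] (S : Finset G)
    (hS : Subgroup.closure (S : Set G) = ⊤) :
    -- collectability: the one-object hom filtered set is collectable
    (∀ n : ℕ, {g : G | wordLength S g ≤ n}.Finite) ∧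
    -- tameness
    (∀ ℓ : ℝ, ∃ N : ℕ, 0 < N ∧
      ∀ f : Fin N → G, (∀ i, f i ≠ 1) → ℓ < ∑ i, (wordLength S (f i) : ℝ)) ∧
    -- the magnitude is the inverse of the growth series
    (∃ m : ℝ → ℚ, IsNov m ∧
      conv (growthSeries G S) m = delta ∧ conv m (growthSeries G S) = delta) := by
  refine ⟨collectable S hS, ?_, ?_⟩
  · -- tameness
    intro ℓ
    refine ⟨⌈ℓ⌉₊ + 1, Nat.succ_pos _, ?_⟩
    intro f hf
    have hle : ∀ i, (1 : ℝ) ≤ (wordLength S (f i) : ℝ) := fun i => by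
      exact_mod_cast one_le_wordLength S hS (hf i)
    calc ℓ ≤ (⌈ℓ⌉₊ : ℝ) := Nat.le_ceil ℓ
      _ < (⌈ℓ⌉₊ + 1 : ℕ) := by exact_mod_cast Nat.lt_succ_self _
      _ = ∑ _i : Fin (⌈ℓ⌉₊ + 1), (1 : ℝ) := by simp
      _ ≤ ∑ i, (wordLength S (f i) : ℝ) := Finset.sum_le_sum fun i _ => hle i
  · -- magnitude
    rw [growthSeries_eq]
    refine conv_inv (fun n => (Nat.card {g : G // wordLength S g = n} : ℚ)) ?_
    simp [card_zero S hS]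
end
end

section
/- Let P be a finite ranked poset with minimum element 0 and rank function r. Metrize P by d(a,b) = r(b) - r(a) if a ≤ b and ∞ otherwise. Then the weighting of P at 0 satisfies k^0 = ∑_{a ∈ P} ζ_P^{-1}(0,a) = π_P(-q), where π_P(q) = ∑_{a∈P} μ_P(0,a)(-q)^{r(a)} is the Poincaré polynomial of P and μ_P is the Möbius function of P. -/
/-! Each entry `ζ_P(a,b)` is the monomial `q^{r(b)-r(a)}`, and these exponents add along chains, so a
left inverse `ζ⁻¹` of `ζ_P` has `ζ⁻¹(a,b)` concentrated in the exponent `r(b) - r(a)`: this follows by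
descending induction on `a` from `ζ⁻¹(a,b) = δ(a,b) - ∑_{u > a} q^{r(u)-r(a)} ζ⁻¹(u,b)`. Reading
`ζ_P ζ⁻¹ = 1` at that exponent shows that the coefficients of `ζ⁻¹` form a right inverse of `ξ_P`,
hence are `μ_P`; at `a = ⊥` the exponent is `r(b)` because `r ⊥ = 0`. -/

noncomputable section
open Classical

/-- The zeta matrix of a ranked poset metrized by `d(a,b) = r(b) - r(a)` if `a ≤ b`
and `∞` otherwise: `ζ(a,b) = q^{r(b)-r(a)}` if `a ≤ b` and `0` otherwise. -/
def rankedZeta (P : Type) [PartialOrder P] (r : P → ℕ) : P → P → ℝ → ℚ :=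
  fun a b x => if a ≤ b ∧ x = ((r b : ℝ) - (r a : ℝ)) then 1 else 0

/-- The incidence matrix `ξ_P(x,y) = 1` if `x ≤ y`, `0` otherwise, over `ℚ`. -/
def xiMatrix (P : Type) [PartialOrder P] [Fintype P] : Matrix P P ℚ :=
  fun a b => if a ≤ b then 1 else 0

open Finset

def RankedZetaLeftInv (P : Type) [PartialOrder P] [Fintype P] (r : P → ℕ)
    (ζinv : P → P → ℝ → ℚ) : Prop :=
  ∀ (a b : P) (x : ℝ),
    (∑ u : P, conv (rankedZeta P r a u) (ζinv u b) x) = if a = b ∧ x = 0 then 1 else 0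

lemma conv_rankedZeta_left {P : Type} [PartialOrder P] (r : P → ℕ) (a u : P)
    (f : ℝ → ℚ) (x : ℝ) :
    conv (rankedZeta P r a u) f x =
      if a ≤ u then f (x - ((r u : ℝ) - (r a : ℝ))) else 0 := by
  unfold conv rankedZeta
  split_ifs with h
  · rw [finsum_eq_single _ ((r u : ℝ) - (r a : ℝ)) fun y hy => by simp [hy]]
    simp [h]
  · simp [h]

namespace RankedZetaLeftInv

variable {P : Type} [PartialOrder P] [Fintype P] {r : P → ℕ} {ζinv : P → P → ℝ → ℚ}

lemma sum_ite_le_eq (h : RankedZetaLeftInv P r ζinv) (a b : P) (x : ℝ) :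
    (∑ u : P, if a ≤ u then ζinv u b (x - ((r u : ℝ) - (r a : ℝ))) else 0) =
      if a = b ∧ x = 0 then 1 else 0 := by
  rw [← h a b x]
  exact sum_congr rfl fun u _ => (conv_rankedZeta_left r a u _ x).symm

lemma apply_eq_zero (h : RankedZetaLeftInv P r ζinv) (a b : P) {x : ℝ}
    (hx : x ≠ (r b : ℝ) - (r a : ℝ)) : ζinv a b x = 0 := by
  induction a using WellFoundedGT.induction generalizing x with
  | _ a ih =>
    have hsum := h.sum_ite_le_eq a b x
    rw [sum_eq_single_of_mem a (mem_univ a) fun u _ hua => ?_] at hsum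
    · have hδ : ¬(a = b ∧ x = 0) := by
        rintro ⟨rfl, rfl⟩
        simp at hx
      simpa [hδ] using hsum
    · split_ifs with hau
      · exact ih u (lt_of_le_of_ne hau (Ne.symm hua)) fun hu => hx (by linarith)
      · rfl

lemma xiMatrix_mul (h : RankedZetaLeftInv P r ζinv) :
    xiMatrix P * Matrix.of (fun a b => ζinv a b ((r b : ℝ) - (r a : ℝ))) = 1 := by
  ext a b
  have hδ : (if a = b then (1 : ℚ) else 0) = if a = b ∧ (r b : ℝ) - r a = 0 then 1 else 0 := by
    by_cases hab : a = b <;> simp [hab]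
  rw [Matrix.mul_apply, Matrix.one_apply, hδ, ← h.sum_ite_le_eq]
  refine sum_congr rfl fun u _ => ?_
  by_cases hau : a ≤ u <;> simp [xiMatrix, hau]

lemma inv_xiMatrix (h : RankedZetaLeftInv P r ζinv) :
    (xiMatrix P)⁻¹ = Matrix.of (fun a b => ζinv a b ((r b : ℝ) - (r a : ℝ))) :=
  Matrix.inv_eq_right_inv h.xiMatrix_mul

end RankedZetaLeftInv

theorem stmt12_general (P : Type) [PartialOrder P] [OrderBot P] [Fintype P]
    (r : P → ℕ) (hr0 : r ⊥ = 0)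
    (ζinv : P → P → ℝ → ℚ)
    (hleft : ∀ (a b : P) (x : ℝ),
      (∑ u : P, conv (rankedZeta P r a u) (ζinv u b) x) = if a = b ∧ x = 0 then 1 else 0) :
    (fun x : ℝ => ∑ a : P, ζinv ⊥ a x) =
      fun x : ℝ => ∑ a : P, (if x = (r a : ℝ) then (xiMatrix P)⁻¹ ⊥ a else 0) := by
  have hζ : RankedZetaLeftInv P r ζinv := hleft
  funext x
  refine sum_congr rfl fun a _ => ?_
  rw [hζ.inv_xiMatrix]
  split_ifs with hx
  · simp [hx, hr0]
  · exact hζ.apply_eq_zero ⊥ a (by simpa [hr0] using hx)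

/-- Let `P` be a finite ranked poset with minimum element `⊥` and rank function `r`,
metrized by `d(a,b) = r(b) - r(a)` for `a ≤ b` and `∞` otherwise.  Then the weighting of
`P` at `⊥` satisfies `k^⊥ = ∑_a ζ_P⁻¹(⊥,a) = π_P(-q) = ∑_a μ_P(⊥,a) q^{r(a)}`, where
`μ_P = ξ_P⁻¹` is the Möbius function of `P`. -/
theorem stmt12 (P : Type) [PartialOrder P] [OrderBot P] [Fintype P]
    (r : P → ℕ) (hr0 : r ⊥ = 0)
    (hrmono : ∀ a b : P, a < b → r a < r b)
    (hrcov : ∀ a b : P, a ⋖ b → r b = r a + 1)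
    (ζinv : P → P → ℝ → ℚ)
    (hleft : ∀ (a b : P) (x : ℝ),
      (∑ u : P, conv (rankedZeta P r a u) (ζinv u b) x) = if a = b ∧ x = 0 then 1 else 0)
    (hright : ∀ (a b : P) (x : ℝ),
      (∑ u : P, conv (ζinv a u) (rankedZeta P r u b) x) = if a = b ∧ x = 0 then 1 else 0) :
    (fun x : ℝ => ∑ a : P, ζinv ⊥ a x) =
      fun x : ℝ => ∑ a : P, (if x = (r a : ℝ) then (xiMatrix P)⁻¹ ⊥ a else 0) :=
  stmt12_general P r hr0 ζinv hleft
end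
end

section
/- Let F : X → Fsetcat be a normal oplax functor such that X and each Fx are categories enriched in collectable filtered sets. Then the Grothendieck-type category E(F) — with objects pairs (x,a), a ∈ Fx, morphisms (f,ξ) : (x,a) → (x',b) where f : x → x' in X and ξ : (Ff)a → b in Fx', and deg(f,ξ) = deg f + deg ξ — is again enriched in collectable filtered sets, i.e., each hom filtered set E(F)((x,a),(x',b)) has finite filtration levels. -/
/-!
Degrees are nonnegative, so a pair `(f, ξ)` of total degree `≤ ℓ` has `deg f ≤ ℓ` and
`deg ξ ≤ ℓ`. The level `ℓ` of `E(F)((b,a),(b',a'))` therefore lies in the union, over the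
finitely many `f` of degree `≤ ℓ`, of the level `ℓ` of the fiber `Fb'(Ff a, a')`, and each of
these is finite.
-/

noncomputable section
open Classical

variable {C : Type}

/-- A normal oplax functor `F : X → Fsetcat`: filtered-set enriched categories as fibers,
degree-non-increasing filtered functors for morphisms, strict preservation of
identities, and comparison transformations `τ_{f,g} : F(g∘f) ⇒ Fg ∘ Ff` whose components
have degree `≤ deg f + deg g − deg(g∘f)`. -/
structure NOF (B : Type) (X : FCat B) where
  Ob : B → Type
  Fib : ∀ b : B, FCat (Ob b)
  map : ∀ {b b' : B}, X.Hom b b' → Ob b → Ob b'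
  mapHom : ∀ {b b' : B} (f : X.Hom b b') {a a' : Ob b},
    (Fib b).Hom a a' → (Fib b').Hom (map f a) (map f a')
  mapHom_deg : ∀ {b b' : B} (f : X.Hom b b') {a a' : Ob b} (ξ : (Fib b).Hom a a'),
    (Fib b').deg (mapHom f ξ) ≤ (Fib b).deg ξ
  mapHom_id : ∀ {b b' : B} (f : X.Hom b b') (a : Ob b),
    mapHom f ((Fib b).id a) = (Fib b').id (map f a)
  mapHom_comp : ∀ {b b' : B} (f : X.Hom b b') {a₁ a₂ a₃ : Ob b}
    (ξ : (Fib b).Hom a₁ a₂) (θ : (Fib b).Hom a₂ a₃),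
    mapHom f ((Fib b).comp ξ θ) = (Fib b').comp (mapHom f ξ) (mapHom f θ)
  map_id : ∀ (b : B) (a : Ob b), map (X.id b) a = a
  mapHom_id' : ∀ (b : B) {a a' : Ob b} (ξ : (Fib b).Hom a a'),
    HEq (mapHom (X.id b) ξ) ξ
  τ : ∀ {b b' b'' : B} (f : X.Hom b b') (g : X.Hom b' b'') (a : Ob b),
    (Fib b'').Hom (map (X.comp f g) a) (map g (map f a))
  τ_deg : ∀ {b b' b'' : B} (f : X.Hom b b') (g : X.Hom b' b'') (a : Ob b),
    (Fib b'').deg (τ f g a) ≤ X.deg f + X.deg g - X.deg (X.comp f g)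
  τ_natural : ∀ {b b' b'' : B} (f : X.Hom b b') (g : X.Hom b' b'')
    {a a' : Ob b} (ξ : (Fib b).Hom a a'),
    (Fib b'').comp (mapHom (X.comp f g) ξ) (τ f g a') =
      (Fib b'').comp (τ f g a) (mapHom g (mapHom f ξ))

theorem Set.Finite.sigma {ι : Type*} {α : ι → Type*} {s : Set ι} {t : ∀ i, Set (α i)}
    (hs : s.Finite) (ht : ∀ i ∈ s, (t i).Finite) : (s.sigma t).Finite := by
  rw [Set.sigma_eq_biUnion]
  exact hs.biUnion fun i hi => (ht i hi).image _

theorem Set.finite_sublevel_sigma_add {ι R : Type*} {α : ι → Type*}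
    [AddCommMonoid R] [PartialOrder R] [IsOrderedAddMonoid R]
    (d : ι → R) (e : ∀ i, α i → R) (hd : ∀ i, 0 ≤ d i) (he : ∀ i x, 0 ≤ e i x)
    (hι : ∀ ℓ, {i | d i ≤ ℓ}.Finite) (hα : ∀ i ℓ, {x | e i x ≤ ℓ}.Finite) (ℓ : R) :
    {p : Σ i, α i | d p.1 + e p.1 p.2 ≤ ℓ}.Finite := by
  refine ((hι ℓ).sigma fun i _ => hα i ℓ).subset ?_
  rintro ⟨i, x⟩ (h : d i + e i x ≤ ℓ)
  exact ⟨(le_add_of_nonneg_right (he i x)).trans h, (le_add_of_nonneg_left (hd i)).trans h⟩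

/-- Let `F : X → Fsetcat` be a normal oplax functor such that `X` and each fiber `Fx`
are enriched in collectable filtered sets.  Then the Grothendieck-type category `E(F)` —
whose hom filtered set from `(b,a)` to `(b',a')` is `⋃_{f : b → b'} {f} × Fb'(Ff a, a')`,
with `deg (f,ξ) = deg f + deg ξ` — is again enriched in collectable filtered sets. -/
theorem stmt18 (B : Type) (X : FCat B) (F : NOF B X)
    (hX : X.Collectable)
    (hF : ∀ b : B, (F.Fib b).Collectable) :
    ∀ (b b' : B) (a : F.Ob b) (a' : F.Ob b') (ℓ : ℝ),
      {p : Σ f : X.Hom b b', (F.Fib b').Hom (F.map f a) a' |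
        X.deg p.1 + (F.Fib b').deg p.2 ≤ ℓ}.Finite := by
  intro b b' a a' ℓ
  exact Set.finite_sublevel_sigma_add (fun f => X.deg f) (fun _ ξ => (F.Fib b').deg ξ)
    X.deg_nonneg (fun _ => (F.Fib b').deg_nonneg) (hX b b') (fun f => hF b' (F.map f a) a') ℓ
end
end

section
/- Let F : X → Fsetcat be a normal oplax functor such that X, each fiber Fx, and E(F) are categories enriched in collectable filtered sets of finite type. If X has a weighting k^• and each Fx has a weighting (also denoted k^•), then the function (x,a) ↦ k^x · k^a is a weighting on E(F): for every object (x',b), ∑_{(x,a)} #E(F)((x',b),(x,a)) · k^x k^a = 1. -/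
noncomputable section
open Classical

variable {C : Type}

/-- The zeta function of the fiber `Fb`. -/
def fibZeta {B : Type} {X : FCat B} (F : NOF B X) (b : B) (a a' : F.Ob b) : ℝ → ℚ :=
  fun x => (Nat.card {ξ : (F.Fib b).Hom a a' // (F.Fib b).deg ξ = x} : ℚ)

/-- The zeta function of the Grothendieck-type category `E(F)`. -/
def grothZeta {B : Type} {X : FCat B} (F : NOF B X)
    (p q : Σ b : B, F.Ob b) : ℝ → ℚ :=
  fun x => (Nat.card {m : Σ f : X.Hom p.1 q.1, (F.Fib q.1).Hom (F.map f p.2) q.2 //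
    X.deg m.1 + (F.Fib q.1).deg m.2 = x} : ℚ)


lemma IsNov.nonneg_of_ne {f : ℝ → ℚ} (hf : IsNov f) {u : ℝ} (hu : f u ≠ 0) : 0 ≤ u := by
  by_contra h; exact hu (hf.2 u (lt_of_not_ge h))

lemma finsum_ne_zero_exists {α : Type*} {f : α → ℚ} (h : ∑ᶠ i, f i ≠ 0) : ∃ i, f i ≠ 0 := by
  by_contra hc; push_neg at hc; exact h (finsum_eq_zero_of_forall_eq_zero hc)

lemma conv_ne_zero {f g : ℝ → ℚ} {x : ℝ} (h : conv f g x ≠ 0) :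
    ∃ t, f t ≠ 0 ∧ g (x - t) ≠ 0 := by
  obtain ⟨t, ht⟩ := finsum_ne_zero_exists h
  exact ⟨t, left_ne_zero_of_mul ht, right_ne_zero_of_mul ht⟩

lemma finsum_swap {α β : Type*} (f : α → β → ℚ) (s : Finset α) (t : Finset β)
    (h : ∀ a b, f a b ≠ 0 → a ∈ s ∧ b ∈ t) :
    ∑ᶠ a, ∑ᶠ b, f a b = ∑ᶠ b, ∑ᶠ a, f a b := by
  have h1 : ∀ a : α, (∑ᶠ b, f a b) = ∑ b ∈ t, f a b := fun a =>
    finsum_eq_sum_of_support_subset _ (fun b hb => (h a b hb).2)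
  have h2 : ∀ b : β, (∑ᶠ a, f a b) = ∑ a ∈ s, f a b := fun b =>
    finsum_eq_sum_of_support_subset _ (fun a ha => (h a b ha).1)
  calc ∑ᶠ a, ∑ᶠ b, f a b = ∑ a ∈ s, ∑ b ∈ t, f a b := by
        rw [show (fun a => ∑ᶠ b, f a b) = fun a => ∑ b ∈ t, f a b from funext h1]
        refine finsum_eq_sum_of_support_subset _ (fun a ha => ?_)
        simp only [Function.mem_support] at ha
        obtain ⟨b, hb, hab⟩ := Finset.exists_ne_zero_of_sum_ne_zero ha
        exact (h a b hab).1
    _ = ∑ b ∈ t, ∑ a ∈ s, f a b := Finset.sum_comm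
    _ = ∑ᶠ b, ∑ᶠ a, f a b := by
        rw [show (fun b => ∑ᶠ a, f a b) = fun b => ∑ a ∈ s, f a b from funext h2]
        refine (finsum_eq_sum_of_support_subset _ (fun b hb => ?_)).symm
        simp only [Function.mem_support] at hb
        obtain ⟨a, ha, hab⟩ := Finset.exists_ne_zero_of_sum_ne_zero hb
        exact (h a b hab).2

lemma finsum_sigma_le {Y : Type*} {O : Y → Type*} (g : (Σ y, O y) → ℚ)
    (sy : Finset Y) (sa : ∀ y, Finset (O y))
    (h : ∀ q : Σ y, O y, g q ≠ 0 → q.1 ∈ sy ∧ q.2 ∈ sa q.1) :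
    ∑ᶠ q, g q = ∑ᶠ y, ∑ᶠ a, g ⟨y, a⟩ := by
  have h1 : ∀ y, (∑ᶠ a, g ⟨y, a⟩) = ∑ a ∈ sa y, g ⟨y, a⟩ := fun y =>
    finsum_eq_sum_of_support_subset _ (fun a ha => (h ⟨y, a⟩ ha).2)
  calc ∑ᶠ q, g q = ∑ q ∈ sy.sigma sa, g q := by
        refine finsum_eq_sum_of_support_subset _ (fun q hq => ?_)
        rw [Finset.mem_coe, Finset.mem_sigma]
        exact ⟨(h q hq).1, (h q hq).2⟩
    _ = ∑ y ∈ sy, ∑ a ∈ sa y, g ⟨y, a⟩ := Finset.sum_sigma _ _ _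
    _ = ∑ᶠ y, ∑ᶠ a, g ⟨y, a⟩ := by
        rw [show (fun y => ∑ᶠ a, g ⟨y, a⟩) = fun y => ∑ a ∈ sa y, g ⟨y, a⟩ from funext h1]
        refine (finsum_eq_sum_of_support_subset _ (fun y hy => ?_)).symm
        simp only [Function.mem_support] at hy
        obtain ⟨a, ha, hya⟩ := Finset.exists_ne_zero_of_sum_ne_zero hy
        exact (h ⟨y, a⟩ hya).1

lemma novCard {ι : Type*} (d : ι → ℝ) (hd : ∀ i, 0 ≤ d i)
    (hfin : ∀ L : ℝ, {i | d i ≤ L}.Finite) :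
    IsNov (fun t => (Nat.card {i // d i = t} : ℚ)) := by
  constructor
  · intro L
    refine ((hfin L).image d).subset ?_
    rintro t ⟨htL, ht⟩
    have hne : Nonempty {i // d i = t} := by
      by_contra h; rw [not_nonempty_iff] at h
      simp [Nat.card_of_isEmpty] at ht
    obtain ⟨i, hi⟩ := hne
    exact ⟨i, by rw [← hi] at htL; exact htL, hi⟩
  · intro t ht
    have : IsEmpty {i // d i = t} := ⟨fun i => by have := hd i.1; have := i.2; linarith⟩
    simp [Nat.card_of_isEmpty]

lemma IsNov.conv {f g : ℝ → ℚ} (hf : IsNov f) (hg : IsNov g) : IsNov (conv f g) := by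
  constructor
  · intro L
    refine (((hf.1 L).prod (hg.1 L)).image (fun p => p.1 + p.2)).subset ?_
    rintro ℓ ⟨hL, hne⟩
    obtain ⟨t, ht, hgt⟩ := conv_ne_zero hne
    have h1 : 0 ≤ t := hf.nonneg_of_ne ht
    have h2 : 0 ≤ ℓ - t := hg.nonneg_of_ne hgt
    exact ⟨(t, ℓ - t), ⟨⟨by show t ≤ L; linarith, ht⟩,
      ⟨by show ℓ - t ≤ L; linarith, hgt⟩⟩, by simp⟩
  · intro ℓ hℓ
    apply finsum_eq_zero_of_forall_eq_zero
    intro t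
    rcases le_or_gt 0 t with h | h
    · rw [hg.2 (ℓ - t) (by linarith), mul_zero]
    · rw [hf.2 t h, zero_mul]

lemma conv_delta_right (f : ℝ → ℚ) (x : ℝ) : conv f delta x = f x := by
  unfold conv
  rw [finsum_eq_single _ x]
  · simp [delta]
  · intro t ht
    have : x - t ≠ 0 := fun h => ht (by linarith [sub_eq_zero.mp h])
    simp [delta, this]

lemma conv_commu (f g : ℝ → ℚ) (x : ℝ) : conv f g x = conv g f x := by
  unfold conv
  rw [← finsum_comp_equiv (Equiv.subLeft x) (f := fun t => g t * f (x - t))]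
  simp only [Equiv.subLeft_apply, sub_sub_cancel]
  exact finsum_congr fun t => mul_comm _ _

lemma shift_finsum (s : ℝ) (F : ℝ → ℚ) :
    ∑ᶠ t : ℝ, F (t - s) = ∑ᶠ t : ℝ, F t := by
  rw [← finsum_comp_equiv (Equiv.subRight s) (f := F)]
  simp [Equiv.subRight]

lemma key {ι : Type*} (d : ι → ℝ) (hd : ∀ i, 0 ≤ d i)
    (hfin : ∀ L : ℝ, {i | d i ≤ L}.Finite) {g : ℝ → ℚ} (hg : IsNov g) (x : ℝ) :
    ∑ᶠ t : ℝ, (Nat.card {i // d i = t} : ℚ) * g (x - t) = ∑ᶠ i, g (x - d i) := by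
  set sF : Finset ι := (hfin x).toFinset with hsF
  set Tf : Finset ℝ := ((hfin x).image d).toFinset with hTf
  have hmem : ∀ i : ι, i ∈ sF ↔ d i ≤ x := by intro i; simp [hsF]
  have hTmem : ∀ t : ℝ, t ∈ Tf ↔ ∃ i, d i ≤ x ∧ d i = t := by intro t; simp [hTf]
  have hcard : ∀ t : ℝ, t ≤ x →
      (Nat.card {i // d i = t} : ℚ) = ((sF.filter (fun i => d i = t)).card : ℚ) := by
    intro t htx
    have hset : {i | d i = t} = ↑(sF.filter (fun i => d i = t)) := by
      ext i
      simp only [Finset.coe_filter, Set.mem_setOf_eq, hmem]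
      exact ⟨fun h => ⟨h ▸ htx, h⟩, fun h => h.2⟩
    have : Nat.card {i // d i = t} = Set.ncard {i | d i = t} :=
      (Nat.card_coe_set_eq _).symm ▸ rfl
    rw [show {i // d i = t} = ↥{i | d i = t} from rfl] at *
    rw [Nat.card_coe_set_eq, hset, Set.ncard_coe_finset]
  calc ∑ᶠ t : ℝ, (Nat.card {i // d i = t} : ℚ) * g (x - t)
      = ∑ t ∈ Tf, (Nat.card {i // d i = t} : ℚ) * g (x - t) := by
        refine finsum_eq_sum_of_support_subset _ (fun t ht => ?_)
        simp only [Function.mem_support] at ht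
        have hc : (Nat.card {i // d i = t} : ℚ) ≠ 0 := left_ne_zero_of_mul ht
        have hgt : g (x - t) ≠ 0 := right_ne_zero_of_mul ht
        have htx : t ≤ x := by have := hg.nonneg_of_ne hgt; linarith
        have hne : Nonempty {i // d i = t} := by
          by_contra h; rw [not_nonempty_iff] at h
          simp [Nat.card_of_isEmpty] at hc
        obtain ⟨i, hi⟩ := hne
        rw [Finset.mem_coe, hTmem]
        exact ⟨i, hi ▸ htx, hi⟩
    _ = ∑ t ∈ Tf, ∑ i ∈ sF.filter (fun i => d i = t), g (x - d i) := by
        refine Finset.sum_congr rfl (fun t ht => ?_)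
        rw [hTmem] at ht
        obtain ⟨i, hix, hit⟩ := ht
        have hre : ∑ i ∈ sF.filter (fun i => d i = t), g (x - d i)
            = (sF.filter (fun i => d i = t)).card • g (x - t) := by
          rw [← Finset.sum_const]
          exact Finset.sum_congr rfl (fun j hj => by rw [(Finset.mem_filter.mp hj).2])
        rw [hcard t (hit ▸ hix), hre, nsmul_eq_mul]
    _ = ∑ i ∈ sF, g (x - d i) := by
        refine Finset.sum_fiberwise_of_maps_to (fun i hi => ?_) _
        rw [hTmem]
        exact ⟨i, (hmem i).mp hi, rfl⟩
    _ = ∑ᶠ i, g (x - d i) := by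
        refine (finsum_eq_sum_of_support_subset _ (fun i hi => ?_)).symm
        simp only [Function.mem_support] at hi
        have := hg.nonneg_of_ne hi
        rw [Finset.mem_coe, hmem]; linarith

lemma conv_assoc {f g h : ℝ → ℚ} (hf : IsNov f) (hg : IsNov g) (hh : IsNov h) (x : ℝ) :
    conv (conv f g) h x = conv f (conv g h) x := by
  have hgfin : ∀ s : ℝ, (Function.support fun t => g (t - s) * h (x - t)).Finite := by
    intro s
    refine (((hg.1 (x - s)).image (fun u => u + s))).subset ?_
    intro t ht
    simp only [Function.mem_support] at ht
    have h1 := left_ne_zero_of_mul ht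
    have h2 := right_ne_zero_of_mul ht
    have := hh.nonneg_of_ne h2
    exact ⟨t - s, ⟨by linarith, h1⟩, by ring⟩
  calc conv (conv f g) h x
      = ∑ᶠ t : ℝ, ∑ᶠ s : ℝ, f s * g (t - s) * h (x - t) := by
        refine finsum_congr fun t => ?_
        show (∑ᶠ s, f s * g (t - s)) * h (x - t) = _
        rw [finsum_mul' _ _ ?_]
        · refine ((hf.1 t).subset ?_)
          intro s hs
          simp only [Function.mem_support] at hs
          have h2 := right_ne_zero_of_mul hs
          have := hg.nonneg_of_ne h2
          exact ⟨by linarith, left_ne_zero_of_mul hs⟩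
    _ = ∑ᶠ s : ℝ, ∑ᶠ t : ℝ, f s * g (t - s) * h (x - t) := by
        refine (finsum_swap (fun s t => f s * g (t - s) * h (x - t)) (hf.1 x).toFinset
          (((hf.1 x).prod (hg.1 x)).image (fun p => p.1 + p.2)).toFinset
          (fun s t hst => ?_)).symm
        have h1 : f s ≠ 0 := left_ne_zero_of_mul (left_ne_zero_of_mul hst)
        have h2 : g (t - s) ≠ 0 := right_ne_zero_of_mul (left_ne_zero_of_mul hst)
        have h3 : h (x - t) ≠ 0 := right_ne_zero_of_mul hst
        have e1 := hf.nonneg_of_ne h1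
        have e2 := hg.nonneg_of_ne h2
        have e3 := hh.nonneg_of_ne h3
        constructor
        · rw [Set.Finite.mem_toFinset]; exact ⟨by linarith, h1⟩
        · rw [Set.Finite.mem_toFinset]
          exact ⟨(s, t - s), ⟨⟨by show s ≤ x; linarith, h1⟩,
            ⟨by show t - s ≤ x; linarith, h2⟩⟩, by simp⟩
    _ = conv f (conv g h) x := by
        refine finsum_congr fun s => ?_
        show _ = f s * conv g h (x - s)
        have hc : ∑ᶠ t : ℝ, g (t - s) * h (x - t) = conv g h (x - s) :=
          calc ∑ᶠ t : ℝ, g (t - s) * h (x - t)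
              = ∑ᶠ t : ℝ, (fun u : ℝ => g u * h (x - s - u)) (t - s) :=
                finsum_congr fun t => by
                  show g (t - s) * h (x - t) = g (t - s) * h (x - s - (t - s))
                  rw [show x - s - (t - s) = x - t from by ring]
            _ = ∑ᶠ u : ℝ, g u * h (x - s - u) :=
                shift_finsum s (fun u : ℝ => g u * h (x - s - u))
            _ = conv g h (x - s) := rfl
        rw [← hc, mul_finsum' _ _ (hgfin s)]
        exact finsum_congr fun t => by ring

lemma conv_left_comm {f g h : ℝ → ℚ} (hf : IsNov f) (hg : IsNov g) (hh : IsNov h) (x : ℝ) :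
    conv f (conv g h) x = conv g (conv f h) x := by
  rw [← conv_assoc hf hg hh x, ← conv_assoc hg hf hh x]
  refine finsum_congr fun t => ?_
  rw [conv_commu f g t]

/-- Let `F : X → Fsetcat` be a normal oplax functor with `X`, each fiber `Fx`, and
`E(F)` enriched in collectable filtered sets and of finite type.  If `k^•` is a
weighting on `X` and each `Fx` has a weighting `k^•`, then `(x,a) ↦ k^x · k^a` is a
weighting on `E(F)`: for every object `(x',b)`,
`∑_{(x,a)} #E(F)((x',b),(x,a)) · k^x k^a = 1`. -/
theorem stmt19 (B : Type) (X : FCat B) (F : NOF B X)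
    (hXcol : X.Collectable) (hFcol : ∀ b : B, (F.Fib b).Collectable)
    (hXft : MSmat B (zeta X))
    (hFft : ∀ b : B, MSmat (F.Ob b) (fibZeta F b))
    (hEft : MSmat (Σ b : B, F.Ob b) (grothZeta F))
    (kX : B → ℝ → ℚ) (hkXNov : ∀ b, IsNov (kX b))
    (hkX : ∀ (b : B) (x : ℝ), (∑ᶠ b' : B, conv (zeta X b b') (kX b') x) = delta x)
    (kF : ∀ b : B, F.Ob b → ℝ → ℚ) (hkFNov : ∀ b a, IsNov (kF b a))
    (hkF : ∀ (b : B) (a : F.Ob b) (x : ℝ),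
      (∑ᶠ a' : F.Ob b, conv (fibZeta F b a a') (kF b a') x) = delta x) :
    ∀ (p : Σ b : B, F.Ob b) (x : ℝ),
      (∑ᶠ q : Σ b : B, F.Ob b,
        conv (grothZeta F p q) (conv (kX q.1) (kF q.1 q.2)) x) = delta x := by
  classical
  intro p x
  have novZeta : ∀ y y' : B, IsNov (zeta X y y') := fun y y' =>
    novCard (fun f : X.Hom y y' => X.deg f) (fun f => X.deg_nonneg f) (hXcol y y')
  have novFib : ∀ (y : B) (a a' : F.Ob y), IsNov (fibZeta F y a a') := fun y a a' =>
    novCard (fun ξ : (F.Fib y).Hom a a' => (F.Fib y).deg ξ)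
      (fun ξ => (F.Fib y).deg_nonneg ξ) (hFcol y a a')
  have novG : ∀ (y : B) (a : F.Ob y), IsNov (conv (kX y) (kF y a)) := fun y a =>
    (hkXNov y).conv (hkFNov y a)
  have hslice : ∀ (y : B) (a : F.Ob y) (L : ℝ),
      {m : Σ f : X.Hom p.1 y, (F.Fib y).Hom (F.map f p.2) a |
        X.deg m.1 + (F.Fib y).deg m.2 ≤ L}.Finite := by
    intro y a L
    refine ((hXcol p.1 y L).biUnion
      (fun f _ => ((hFcol y (F.map f p.2) a L).image (Sigma.mk f)))).subset ?_
    intro m hm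
    simp only [Set.mem_setOf_eq] at hm
    have h1 := X.deg_nonneg m.1
    have h2 := (F.Fib y).deg_nonneg m.2
    refine Set.mem_biUnion (show m.1 ∈ {f : X.Hom p.1 y | X.deg f ≤ L} from by
      simp only [Set.mem_setOf_eq]; linarith) ?_
    exact ⟨m.2, by simp only [Set.mem_setOf_eq]; linarith, Sigma.eta m⟩
  -- Step B : per-object computation
  have stepB : ∀ (y : B) (a : F.Ob y),
      conv (grothZeta F p ⟨y, a⟩) (conv (kX y) (kF y a)) x
        = ∑ᶠ f : X.Hom p.1 y,
            conv (kX y) (conv (fibZeta F y (F.map f p.2) a) (kF y a)) (x - X.deg f) := by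
    intro y a
    have B1 : conv (grothZeta F p ⟨y, a⟩) (conv (kX y) (kF y a)) x
        = ∑ᶠ m : Σ f : X.Hom p.1 y, (F.Fib y).Hom (F.map f p.2) a,
            conv (kX y) (kF y a) (x - (X.deg m.1 + (F.Fib y).deg m.2)) :=
      key (fun m : Σ f : X.Hom p.1 y, (F.Fib y).Hom (F.map f p.2) a =>
          X.deg m.1 + (F.Fib y).deg m.2)
        (fun m => add_nonneg (X.deg_nonneg _) ((F.Fib y).deg_nonneg _))
        (hslice y a) (novG y a) x
    have B2 : (∑ᶠ m : Σ f : X.Hom p.1 y, (F.Fib y).Hom (F.map f p.2) a,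
          conv (kX y) (kF y a) (x - (X.deg m.1 + (F.Fib y).deg m.2)))
        = ∑ᶠ f : X.Hom p.1 y, ∑ᶠ ξ : (F.Fib y).Hom (F.map f p.2) a,
            conv (kX y) (kF y a) (x - (X.deg f + (F.Fib y).deg ξ)) := by
      refine finsum_sigma_le
        (fun m : Σ f : X.Hom p.1 y, (F.Fib y).Hom (F.map f p.2) a =>
          conv (kX y) (kF y a) (x - (X.deg m.1 + (F.Fib y).deg m.2)))
        (hXcol p.1 y x).toFinset
        (fun f => (hFcol y (F.map f p.2) a x).toFinset) (fun m hm => ?_)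
      have h0 := (novG y a).nonneg_of_ne hm
      have h1 := X.deg_nonneg m.1
      have h2 := (F.Fib y).deg_nonneg m.2
      constructor
      · rw [Set.Finite.mem_toFinset]; show X.deg m.1 ≤ x; linarith
      · rw [Set.Finite.mem_toFinset]; show (F.Fib y).deg m.2 ≤ x; linarith
    rw [B1, B2]
    refine finsum_congr fun f => ?_
    calc (∑ᶠ ξ : (F.Fib y).Hom (F.map f p.2) a,
          conv (kX y) (kF y a) (x - (X.deg f + (F.Fib y).deg ξ)))
        = ∑ᶠ ξ : (F.Fib y).Hom (F.map f p.2) a,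
            conv (kX y) (kF y a) ((x - X.deg f) - (F.Fib y).deg ξ) :=
          finsum_congr fun ξ => by
            rw [show x - (X.deg f + (F.Fib y).deg ξ)
              = (x - X.deg f) - (F.Fib y).deg ξ from by ring]
      _ = conv (fibZeta F y (F.map f p.2) a) (conv (kX y) (kF y a)) (x - X.deg f) :=
          (key (fun ξ : (F.Fib y).Hom (F.map f p.2) a => (F.Fib y).deg ξ)
            (fun ξ => (F.Fib y).deg_nonneg ξ) (hFcol y (F.map f p.2) a) (novG y a)
            (x - X.deg f)).symm
      _ = conv (kX y) (conv (fibZeta F y (F.map f p.2) a) (kF y a)) (x - X.deg f) :=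
          conv_left_comm (novFib y (F.map f p.2) a) (hkXNov y) (hkFNov y a) _
  -- Step D : summing over the fiber gives kX
  have stepD : ∀ (y : B) (f : X.Hom p.1 y),
      (∑ᶠ a : F.Ob y,
          conv (kX y) (conv (fibZeta F y (F.map f p.2) a) (kF y a)) (x - X.deg f))
        = kX y (x - X.deg f) := by
    intro y f
    set x' := x - X.deg f with hx'
    have hCsupp : ∀ u : ℝ, (Function.support fun a : F.Ob y =>
        conv (fibZeta F y (F.map f p.2) a) (kF y a) u).Finite := by
      intro u
      refine ((hFft y (u + 1) (F.map f p.2)).1).subset ?_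
      intro a ha
      simp only [Function.mem_support] at ha
      obtain ⟨v, hv1, hv2⟩ := conv_ne_zero ha
      have h3 := (hkFNov y a).nonneg_of_ne hv2
      exact ⟨v, by linarith, hv1⟩
    calc (∑ᶠ a : F.Ob y,
          conv (kX y) (conv (fibZeta F y (F.map f p.2) a) (kF y a)) x')
        = ∑ᶠ a : F.Ob y, ∑ᶠ t : ℝ,
            kX y t * conv (fibZeta F y (F.map f p.2) a) (kF y a) (x' - t) := rfl
      _ = ∑ᶠ t : ℝ, ∑ᶠ a : F.Ob y,
            kX y t * conv (fibZeta F y (F.map f p.2) a) (kF y a) (x' - t) := by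
          refine finsum_swap
            (fun (a : F.Ob y) (t : ℝ) =>
              kX y t * conv (fibZeta F y (F.map f p.2) a) (kF y a) (x' - t))
            ((hFft y (x' + 1) (F.map f p.2)).1).toFinset
            (((hkXNov y).1 x').toFinset) (fun a t hat => ?_)
          have h1 : kX y t ≠ 0 := left_ne_zero_of_mul hat
          have h2 : conv (fibZeta F y (F.map f p.2) a) (kF y a) (x' - t) ≠ 0 :=
            right_ne_zero_of_mul hat
          have ht0 : 0 ≤ t := (hkXNov y).nonneg_of_ne h1
          have hx't : 0 ≤ x' - t :=
            ((novFib y (F.map f p.2) a).conv (hkFNov y a)).nonneg_of_ne h2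
          obtain ⟨v, hv1, hv2⟩ := conv_ne_zero h2
          have h3 := (hkFNov y a).nonneg_of_ne hv2
          constructor
          · rw [Set.Finite.mem_toFinset]; exact ⟨v, by linarith, hv1⟩
          · rw [Set.Finite.mem_toFinset]; exact ⟨by linarith, h1⟩
      _ = ∑ᶠ t : ℝ, kX y t *
            ∑ᶠ a : F.Ob y, conv (fibZeta F y (F.map f p.2) a) (kF y a) (x' - t) :=
          finsum_congr fun t => (mul_finsum' _ _ (hCsupp (x' - t))).symm
      _ = ∑ᶠ t : ℝ, kX y t * delta (x' - t) :=
          finsum_congr fun t => by rw [hkF y (F.map f p.2) (x' - t)]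
      _ = kX y x' := conv_delta_right (kX y) x'
  -- Assemble
  have hEfin := (hEft (x + 1) p).1
  calc (∑ᶠ q : Σ b : B, F.Ob b,
        conv (grothZeta F p q) (conv (kX q.1) (kF q.1 q.2)) x)
      = ∑ᶠ y : B, ∑ᶠ a : F.Ob y,
          conv (grothZeta F p ⟨y, a⟩) (conv (kX y) (kF y a)) x := by
        refine finsum_sigma_le
          (fun q : Σ b : B, F.Ob b =>
            conv (grothZeta F p q) (conv (kX q.1) (kF q.1 q.2)) x)
          (hEfin.toFinset.image Sigma.fst)
          (fun y => hEfin.toFinset.preimage (Sigma.mk y) sigma_mk_injective.injOn)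
          (fun q hq => ?_)
        have hqmem : q ∈ hEfin.toFinset := by
          rw [Set.Finite.mem_toFinset]
          obtain ⟨t, ht1, ht2⟩ := conv_ne_zero hq
          have := (novG q.1 q.2).nonneg_of_ne ht2
          exact ⟨t, by linarith, ht1⟩
        exact ⟨Finset.mem_image.mpr ⟨q, hqmem, rfl⟩,
          Finset.mem_preimage.mpr (by rw [Sigma.eta]; exact hqmem)⟩
    _ = ∑ᶠ y : B, conv (zeta X p.1 y) (kX y) x := by
        refine finsum_congr fun y => ?_
        calc (∑ᶠ a : F.Ob y, conv (grothZeta F p ⟨y, a⟩) (conv (kX y) (kF y a)) x)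
            = ∑ᶠ a : F.Ob y, ∑ᶠ f : X.Hom p.1 y,
                conv (kX y) (conv (fibZeta F y (F.map f p.2) a) (kF y a))
                  (x - X.deg f) := finsum_congr (stepB y)
          _ = ∑ᶠ f : X.Hom p.1 y, ∑ᶠ a : F.Ob y,
                conv (kX y) (conv (fibZeta F y (F.map f p.2) a) (kF y a))
                  (x - X.deg f) := by
              refine finsum_swap
                (fun (a : F.Ob y) (f : X.Hom p.1 y) =>
                  conv (kX y) (conv (fibZeta F y (F.map f p.2) a) (kF y a))
                    (x - X.deg f))
                ((hXcol p.1 y x).toFinset.biUnion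
                  (fun f => ((hFft y (x + 1) (F.map f p.2)).1).toFinset))
                (hXcol p.1 y x).toFinset (fun a f haf => ?_)
              have hW : IsNov (conv (kX y)
                  (conv (fibZeta F y (F.map f p.2) a) (kF y a))) :=
                (hkXNov y).conv ((novFib y (F.map f p.2) a).conv (hkFNov y a))
              have hdf : X.deg f ≤ x := by
                have := hW.nonneg_of_ne haf; linarith
              have hfmem : f ∈ (hXcol p.1 y x).toFinset := by
                rw [Set.Finite.mem_toFinset]; exact hdf
              obtain ⟨t, ht1, ht2⟩ := conv_ne_zero haf
              obtain ⟨v, hv1, hv2⟩ := conv_ne_zero ht2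
              have ht0 : 0 ≤ t := (hkXNov y).nonneg_of_ne ht1
              have hv3 := (hkFNov y a).nonneg_of_ne hv2
              have hdf0 := X.deg_nonneg f
              refine ⟨Finset.mem_biUnion.mpr ⟨f, hfmem, ?_⟩, hfmem⟩
              rw [Set.Finite.mem_toFinset]
              exact ⟨v, by linarith, hv1⟩
          _ = ∑ᶠ f : X.Hom p.1 y, kX y (x - X.deg f) := finsum_congr (stepD y)
          _ = ∑ᶠ t : ℝ, zeta X p.1 y t * kX y (x - t) :=
              (key (fun f : X.Hom p.1 y => X.deg f) (fun f => X.deg_nonneg f)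
                (hXcol p.1 y) (hkXNov y) x).symm
          _ = conv (zeta X p.1 y) (kX y) x := rfl
    _ = delta x := hkX p.1 x
end
end
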